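/- The function r on Γ is a class function (r(hgh⁻¹) = r(g) for all g, h ∈ Γ) and satisfies r(g^k) = r(g)^k for every g ∈ Γ and k ∈ ℕ. If moreover μ is symmetric (μ(g) = μ(g⁻¹) for all g), then r(g) = r(g⁻¹) for all g ∈ Γ. -/

import Mathlib

open Filter Topology MeasureTheory
open scoped ENNReal

namespace HarmonicBoundary

variable {Γ : Type} [Group Γ]

/-- Word length of `g` with respect to a generating set `S`. -/
noncomputable def wl (S : Set Γ) (g : Γ) : ℕ :=
  sInf {n : ℕ | ∃ w : List Γ, w.length = n ∧ (∀ x ∈ w, x ∈ S) ∧ w.prod = g}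

/-- Word metric `d(x,y) = |x⁻¹y|`. -/
noncomputable def wdist (S : Set Γ) (x y : Γ) : ℕ := wl S (x⁻¹ * y)

/-- Gromov product `(x|y)_z = (d(x,z)+d(y,z)-d(x,y))/2`. -/
noncomputable def gp (S : Set Γ) (z x y : Γ) : ℝ :=
  ((wdist S x z : ℝ) + (wdist S y z : ℝ) - (wdist S x y : ℝ)) / 2

/-- `S` is a finite symmetric generating set of `Γ`. -/
def IsGenSet (S : Set Γ) : Prop :=
  S.Finite ∧ (∀ s ∈ S, s⁻¹ ∈ S) ∧ Subgroup.closure S = ⊤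

/-- `Γ` is `δ`-hyperbolic with respect to the word metric of `S`:
`(x|y) ≥ min ((x|z), (y|z)) - δ` for all `x y z`. -/
def IsHyperbolic (S : Set Γ) (δ : ℝ) : Prop :=
  0 ≤ δ ∧ ∀ x y z : Γ, min (gp S 1 x z) (gp S 1 y z) - δ ≤ gp S 1 x y

/-- `Γ` is nonelementary: it has no cyclic subgroup of finite index. -/
def Nonelementary (Γ : Type) [Group Γ] : Prop :=
  ∀ g : Γ, (Subgroup.zpowers g).index = 0

/-- A sequence converges to infinity if `(x_i|x_j) → ∞`. -/
def ConvInf (S : Set Γ) (u : ℕ → Γ) : Prop :=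
  Tendsto (fun p : ℕ × ℕ => gp S 1 (u p.1) (u p.2)) atTop atTop

/-- Two sequences converging to infinity are equivalent if `(x_i|y_j) → ∞`. -/
def EquivSeq (S : Set Γ) (u v : ℕ → Γ) : Prop :=
  Tendsto (fun p : ℕ × ℕ => gp S 1 (u p.1) (v p.2)) atTop atTop

/-- An (abstract model of the) Gromov boundary of `Γ`: the points are exactly the
classes of sequences converging to infinity, modulo the equivalence `EquivSeq`,
together with the natural left action of `Γ`. -/
structure Boundary (Γ : Type) [Group Γ] (S : Set Γ) where
  pt : Type
  cls : (ℕ → Γ) → pt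
  cls_surj : ∀ ξ : pt, ∃ u : ℕ → Γ, ConvInf S u ∧ cls u = ξ
  cls_eq : ∀ u v : ℕ → Γ, ConvInf S u → ConvInf S v → (cls u = cls v ↔ EquivSeq S u v)
  smul : Γ → pt → pt
  smul_cls : ∀ (g : Γ) (u : ℕ → Γ), ConvInf S u → smul g (cls u) = cls fun n => g * u n

/-- Extension of the Gromov product to the boundary:
`(ξ|η) = sup liminf (x_i|y_j)` over sequences representing `ξ` and `η`,
as an extended nonnegative real. -/
noncomputable def bgp {S : Set Γ} (B : Boundary Γ S) (ξ η : B.pt) : ℝ≥0∞ :=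
  ⨆ (u : {u : ℕ → Γ // ConvInf S u ∧ B.cls u = ξ})
    (v : {v : ℕ → Γ // ConvInf S v ∧ B.cls v = η}),
    Filter.liminf (fun p : ℕ × ℕ => ENNReal.ofReal (gp S 1 (u.1 p.1) (v.1 p.2))) atTop

/-- Real-valued Gromov product on the boundary (finite for `ξ ≠ η`). -/
noncomputable def bgpR {S : Set Γ} (B : Boundary Γ S) (ξ η : B.pt) : ℝ := (bgp B ξ η).toReal

/-- The canonical topology of the Gromov boundary: a set is open iff around each of
its points it contains a basic neighbourhood `V_r(p) = {q | (q|p) > r}`. -/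
def btop {S : Set Γ} (B : Boundary Γ S) : TopologicalSpace B.pt where
  IsOpen O := ∀ p ∈ O, ∃ r : ℝ≥0∞, r ≠ ⊤ ∧ {q | r < bgp B q p} ⊆ O
  isOpen_univ := fun p _ => ⟨0, ENNReal.zero_ne_top, fun q _ => trivial⟩
  isOpen_inter := by
    intro A A' hA hA' p hp
    obtain ⟨r1, hr1, h1⟩ := hA p hp.1
    obtain ⟨r2, hr2, h2⟩ := hA' p hp.2
    refine ⟨max r1 r2, (max_lt hr1.lt_top hr2.lt_top).ne, fun q hq => ?_⟩
    have hq' : max r1 r2 < bgp B q p := hq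
    exact ⟨h1 (show r1 < bgp B q p from (le_max_left r1 r2).trans_lt hq'),
      h2 (show r2 < bgp B q p from (le_max_right r1 r2).trans_lt hq')⟩
  isOpen_sUnion := by
    intro s hs p hp
    obtain ⟨t, ht, hpt⟩ := hp
    obtain ⟨r, hr, hsub⟩ := hs t ht p hpt
    exact ⟨r, hr, fun q hq => ⟨t, ht, hsub hq⟩⟩

/-- The attracting fixed point `g⁺ = lim_n gⁿ` of an (infinite order) element. -/
def plusPt {S : Set Γ} (B : Boundary Γ S) (g : Γ) : B.pt := B.cls fun n => g ^ n

/-- The repelling fixed point `g⁻ = lim_n g⁻ⁿ` of an (infinite order) element. -/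
def minusPt {S : Set Γ} (B : Boundary Γ S) (g : Γ) : B.pt := B.cls fun n => g⁻¹ ^ n

/-- A geodesic ray starting at the identity. -/
def IsGeodesicRay (S : Set Γ) (x : ℕ → Γ) : Prop :=
  x 0 = 1 ∧ ∀ m n : ℕ, wdist S (x m) (x n) = Nat.dist m n

/-- A geodesic ray from `e` to the boundary point `ξ`, i.e. an element of `[e,ξ]`. -/
def RayTo {S : Set Γ} (B : Boundary Γ S) (x : ℕ → Γ) (ξ : B.pt) : Prop :=
  IsGeodesicRay S x ∧ ConvInf S x ∧ B.cls x = ξ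

/-- A geodesic segment from `x` to `y` (parametrized on `0,…,d(x,y)`),
i.e. an element of `[x,y]`. -/
def IsGeodesicSeg (S : Set Γ) (x y : Γ) (α : ℕ → Γ) : Prop :=
  α 0 = x ∧ α (wdist S x y) = y ∧
  ∀ m n : ℕ, m ≤ wdist S x y → n ≤ wdist S x y → wdist S (α m) (α n) = Nat.dist m n

/-- The boundary "cylinder" `U(ξ,R)`: all `η` such that for every pair of geodesic
rays `x ∈ [e,ξ]`, `y ∈ [e,η]` one has `lim_n (x(n)|y(n)) > R` (the sequence
`(x(n)|y(n))` is nondecreasing, so the limit exceeds `R` iff some term does). -/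
def Uset {S : Set Γ} (B : Boundary Γ S) (ξ : B.pt) (R : ℝ) : Set B.pt :=
  {η | ∀ x y : ℕ → Γ, RayTo B x ξ → RayTo B y η → ∃ n : ℕ, R < gp S 1 (x n) (y n)}

/-- `C_r(p) = {g | (g|e)_p > r}`. -/
def Cset (S : Set Γ) (p : Γ) (r : ℝ) : Set Γ := {g | r < gp S p g 1}

/-- The `R`-neighbourhood `N(α,R)` of a geodesic segment `α ∈ [x,y]`. -/
def segN (S : Set Γ) (x y : Γ) (α : ℕ → Γ) (R : ℝ) : Set Γ :=
  {g | ∃ i ≤ wdist S x y, (wdist S g (α i) : ℝ) ≤ R}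

/-- The `R`-neighbourhood `N(A,R)` of a subset `A ⊆ Γ`. -/
def setN (S : Set Γ) (A : Set Γ) (R : ℝ) : Set Γ :=
  {g | ∃ a ∈ A, (wdist S g a : ℝ) ≤ R}

/-- `μ` is a nondegenerate probability measure on `Γ` with support contained in `S`:
nonnegative, of total mass one, supported in `S`, and the semigroup generated by its
support is the whole of `Γ`. -/
structure IsRWMeasure (S : Set Γ) (μ : Γ → ℝ) : Prop where
  nonneg : ∀ g, 0 ≤ μ g
  support_subset : ∀ g, μ g ≠ 0 → g ∈ S
  total : ∑' g : Γ, μ g = 1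
  nondeg : ∀ g : Γ, ∃ l : List Γ, l ≠ [] ∧ (∀ x ∈ l, 0 < μ x) ∧ l.prod = g

open Classical in
/-- `n`-step transition probabilities `p⁽ⁿ⁾(x,y) = μ*ⁿ(x⁻¹y)` of the random walk. -/
noncomputable def ptrans (μ : Γ → ℝ) : ℕ → Γ → Γ → ℝ
  | 0 => fun x y => if x = y then 1 else 0
  | n + 1 => fun x y => ∑' z : Γ, ptrans μ n x z * μ (z⁻¹ * y)

/-- Green function `G(x,y) = Σ_n p⁽ⁿ⁾(x,y)`. -/
noncomputable def green (μ : Γ → ℝ) (x y : Γ) : ℝ := ∑' n : ℕ, ptrans μ n x y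

/-- `F(x,y) = G(x,y)/G(y,y)`, the probability that the walk from `x` ever hits `y`. -/
noncomputable def greenF (μ : Γ → ℝ) (x y : Γ) : ℝ := green μ x y / green μ y y

/-- The Martin kernel `K(x,y) = G(x,y)/G(e,y)`. -/
noncomputable def martinK (μ : Γ → ℝ) (x y : Γ) : ℝ := green μ x y / green μ 1 y

open Classical in
/-- Transition probabilities of the walk restricted to `Δ` (killed when leaving `Δ`). -/
noncomputable def ptransR (μ : Γ → ℝ) (Δ : Set Γ) : ℕ → Γ → Γ → ℝ
  | 0 => fun x y => if x = y ∧ x ∈ Δ then 1 else 0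
  | n + 1 => fun x y => if y ∈ Δ then ∑' z : Γ, ptransR μ Δ n x z * μ (z⁻¹ * y) else 0

/-- Green function `G_Δ` of the restricted walk. -/
noncomputable def greenR (μ : Γ → ℝ) (Δ : Set Γ) (x y : Γ) : ℝ := ∑' n : ℕ, ptransR μ Δ n x y

/-- `F_Δ(x,y) = G_Δ(x,y)/G_Δ(y,y)`. -/
noncomputable def greenFR (μ : Γ → ℝ) (Δ : Set Γ) (x y : Γ) : ℝ :=
  greenR μ Δ x y / greenR μ Δ y y

/-- Generating function `G_Δ(x,y|z) = Σ_n p_Δ⁽ⁿ⁾(x,y) zⁿ`. -/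
noncomputable def greenRZ (μ : Γ → ℝ) (Δ : Set Γ) (x y : Γ) (z : ℝ) : ℝ :=
  ∑' n : ℕ, ptransR μ Δ n x y * z ^ n

/-- Spectral radius `ρ(P) = lim_n p⁽ⁿ⁾(e,e)^{1/n}` of the walk. -/
noncomputable def specRad (μ : Γ → ℝ) : ℝ :=
  Filter.limsup (fun n : ℕ => (ptrans μ n 1 1) ^ ((n : ℝ)⁻¹)) atTop

/-- `u` is harmonic on `Λ`: `Σ_h p(g,h) u(h) = u(g)` for `g ∈ Λ`, `p(g,h)=μ(g⁻¹h)`. -/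
def HarmonicOn (μ : Γ → ℝ) (u : Γ → ℝ) (Λ : Set Γ) : Prop :=
  ∀ g ∈ Λ, (∑' h : Γ, μ (g⁻¹ * h) * u h) = u g

/-- `u` vanishes at infinity on `Λ`: `u(g_n) → 0` along sequences in `Λ` with `|g_n|→∞`. -/
def VanishesAtInftyOn (S : Set Γ) (u : Γ → ℝ) (Λ : Set Γ) : Prop :=
  ∀ ε : ℝ, 0 < ε → ∃ M : ℕ, ∀ g ∈ Λ, M ≤ wl S g → |u g| ≤ ε

open Classical in
/-- `r(g) = K(g⁻¹,g⁺)` for infinite order `g`, and `r(g) = 1` for finite order `g`;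
here `Kb` is the boundary extension of the Martin kernel. -/
noncomputable def rfun {S : Set Γ} (B : Boundary Γ S) (Kb : Γ → B.pt → ℝ) (g : Γ) : ℝ :=
  if IsOfFinOrder g then 1 else Kb g⁻¹ (plusPt B g)

/-- The ratio set `r(Γ,∂Γ,ν)`: all `l ≥ 0` such that for every `ε > 0` and every
Borel `A` of positive measure there is `g ∈ Γ` such that
`{ω ∈ gA ∩ A : |d(gν)/dν(ω) − l| < ε}` has positive measure; here the
Radon–Nikodym derivative `d(gν)/dν` is the Martin kernel `Kb g`. -/
def ratioSet {S : Set Γ} (B : Boundary Γ S) [MeasurableSpace B.pt]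
    (ν : Measure B.pt) (Kb : Γ → B.pt → ℝ) : Set ℝ :=
  {l : ℝ | 0 ≤ l ∧ ∀ ε : ℝ, 0 < ε → ∀ A : Set B.pt, MeasurableSet A → 0 < ν A →
    ∃ g : Γ, 0 < ν {ω | ω ∈ A ∧ B.smul g⁻¹ ω ∈ A ∧ |Kb g ω - l| < ε}}

/-- A left invariant finitely additive mean on `Γ`; `Γ` is amenable iff one exists. -/
structure InvariantMean (Γ : Type) [Group Γ] where
  m : Set Γ → ℝ
  nonneg : ∀ A, 0 ≤ m A
  total : m Set.univ = 1
  fin_add : ∀ A B : Set Γ, Disjoint A B → m (A ∪ B) = m A + m B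
  invariant : ∀ (g : Γ) (A : Set Γ), m ((g * ·) ⁻¹' A) = m A


/-! ### Auxiliary development -/

section WordLength

variable {Γ : Type} [Group Γ] {S : Set Γ}

private lemma exists_genList (hS : IsGenSet S) (g : Γ) :
    ∃ w : List Γ, (∀ x ∈ w, x ∈ S) ∧ w.prod = g := by
  have hg : g ∈ Subgroup.closure S := by rw [hS.2.2]; trivial
  induction hg using Subgroup.closure_induction with
  | mem x hx => exact ⟨[x], by simp [hx]⟩
  | one => exact ⟨[], by simp⟩
  | mul x y hx hy ihx ihy =>
      obtain ⟨w1, h1, e1⟩ := ihx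
      obtain ⟨w2, h2, e2⟩ := ihy
      refine ⟨w1 ++ w2, ?_, by simp [e1, e2]⟩
      intro a ha
      rcases List.mem_append.1 ha with h | h
      exacts [h1 a h, h2 a h]
  | inv x hx ih =>
      obtain ⟨w, h1, e1⟩ := ih
      refine ⟨(w.map fun a => a⁻¹).reverse, ?_, ?_⟩
      · intro a ha
        simp only [List.mem_reverse, List.mem_map] at ha
        obtain ⟨b, hb, rfl⟩ := ha
        exact hS.2.1 b (h1 b hb)
      · rw [← List.prod_inv_reverse, e1]

private lemma wl_le (w : List Γ) (hw : ∀ x ∈ w, x ∈ S) : wl S w.prod ≤ w.length :=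
  Nat.sInf_le ⟨w, rfl, hw, rfl⟩

private lemma wl_spec (hS : IsGenSet S) (g : Γ) :
    ∃ w : List Γ, w.length = wl S g ∧ (∀ x ∈ w, x ∈ S) ∧ w.prod = g := by
  have hne : {n : ℕ | ∃ w : List Γ, w.length = n ∧ (∀ x ∈ w, x ∈ S) ∧ w.prod = g}.Nonempty := by
    obtain ⟨w, h1, h2⟩ := exists_genList hS g
    exact ⟨w.length, w, rfl, h1, h2⟩
  exact Nat.sInf_mem hne

private lemma wl_one : wl S (1 : Γ) = 0 :=
  Nat.eq_zero_of_le_zero (Nat.sInf_le ⟨[], rfl, by simp, rfl⟩)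

private lemma wl_mul_le (hS : IsGenSet S) (x y : Γ) :
    wl S (x * y) ≤ wl S x + wl S y := by
  obtain ⟨w1, l1, h1, e1⟩ := wl_spec hS x
  obtain ⟨w2, l2, h2, e2⟩ := wl_spec hS y
  have key : wl S ((w1 ++ w2).prod) ≤ (w1 ++ w2).length := by
    refine wl_le _ ?_
    intro a ha
    rcases List.mem_append.1 ha with h | h
    exacts [h1 a h, h2 a h]
  rw [List.prod_append, e1, e2] at key
  simpa [List.length_append, l1, l2] using key

private lemma wl_inv_le (hS : IsGenSet S) (x : Γ) : wl S x⁻¹ ≤ wl S x := by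
  obtain ⟨w, l, h1, e1⟩ := wl_spec hS x
  have key : wl S (((w.map fun a => a⁻¹).reverse).prod) ≤ ((w.map fun a => a⁻¹).reverse).length := by
    refine wl_le _ ?_
    intro a ha
    simp only [List.mem_reverse, List.mem_map] at ha
    obtain ⟨b, hb, rfl⟩ := ha
    exact hS.2.1 b (h1 b hb)
  rw [← List.prod_inv_reverse, e1] at key
  simpa [l] using key

private lemma wl_inv (hS : IsGenSet S) (x : Γ) : wl S x⁻¹ = wl S x :=
  le_antisymm (wl_inv_le hS x) (by simpa using wl_inv_le hS x⁻¹)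

private lemma wdist_eq (x y : Γ) : wdist S x y = wl S (x⁻¹ * y) := rfl

private lemma wdist_one (x : Γ) : wdist S x 1 = wl S x⁻¹ := by
  rw [wdist_eq, mul_one]

/-- the key perturbation estimate for Gromov products -/
private lemma gp_conj_ge (hS : IsGenSet S) (w a b x y : Γ) :
    gp S 1 x y - ((wl S w : ℝ) + wl S a + wl S b) ≤ gp S 1 (w * x * a) (w * y * b) := by
  have hA : (wl S x⁻¹ : ℕ) ≤ wl S (w * x * a)⁻¹ + wl S w + wl S a := by
    have e : a * ((w * x * a)⁻¹ * w) = x⁻¹ := by group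
    calc wl S x⁻¹ = wl S (a * ((w * x * a)⁻¹ * w)) := by rw [e]
      _ ≤ wl S a + wl S ((w * x * a)⁻¹ * w) := wl_mul_le hS _ _
      _ ≤ wl S a + (wl S (w * x * a)⁻¹ + wl S w) :=
          Nat.add_le_add_left (wl_mul_le hS _ _) _
      _ = wl S (w * x * a)⁻¹ + wl S w + wl S a := by omega
  have hB : (wl S y⁻¹ : ℕ) ≤ wl S (w * y * b)⁻¹ + wl S w + wl S b := by
    have e : b * ((w * y * b)⁻¹ * w) = y⁻¹ := by group
    calc wl S y⁻¹ = wl S (b * ((w * y * b)⁻¹ * w)) := by rw [e]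
      _ ≤ wl S b + wl S ((w * y * b)⁻¹ * w) := wl_mul_le hS _ _
      _ ≤ wl S b + (wl S (w * y * b)⁻¹ + wl S w) :=
          Nat.add_le_add_left (wl_mul_le hS _ _) _
      _ = wl S (w * y * b)⁻¹ + wl S w + wl S b := by omega
  have hC : (wl S ((w * x * a)⁻¹ * (w * y * b)) : ℕ)
      ≤ wl S a + wl S (x⁻¹ * y) + wl S b := by
    have e : (w * x * a)⁻¹ * (w * y * b) = a⁻¹ * (x⁻¹ * y) * b := by group
    calc wl S ((w * x * a)⁻¹ * (w * y * b)) = wl S (a⁻¹ * (x⁻¹ * y) * b) := by rw [e]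
      _ ≤ wl S (a⁻¹ * (x⁻¹ * y)) + wl S b := wl_mul_le hS _ _
      _ ≤ wl S a⁻¹ + wl S (x⁻¹ * y) + wl S b :=
          Nat.add_le_add_right (wl_mul_le hS _ _) _
      _ = wl S a + wl S (x⁻¹ * y) + wl S b := by rw [wl_inv hS]
  have hA' : (wl S x⁻¹ : ℝ) ≤ (wl S (w * x * a)⁻¹ : ℝ) + wl S w + wl S a := by
    exact_mod_cast hA
  have hB' : (wl S y⁻¹ : ℝ) ≤ (wl S (w * y * b)⁻¹ : ℝ) + wl S w + wl S b := by
    exact_mod_cast hB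
  have hC' : (wl S ((w * x * a)⁻¹ * (w * y * b)) : ℝ)
      ≤ (wl S a : ℝ) + wl S (x⁻¹ * y) + wl S b := by exact_mod_cast hC
  simp only [gp, wdist_eq, mul_one]
  linarith

private lemma convInf_affine (hS : IsGenSet S) {u : ℕ → Γ} (hu : ConvInf S u) (a b : Γ) :
    ConvInf S fun n => a * u n * b := by
  have h := tendsto_atTop_add_const_right atTop
    (-((wl S a : ℝ) + wl S b + wl S b)) hu
  refine tendsto_atTop_mono (fun p => ?_) h
  have := gp_conj_ge hS a b b (u p.1) (u p.2)
  simp only [sub_eq_add_neg] at this ⊢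
  linarith [gp_conj_ge hS a b b (u p.1) (u p.2)]

private lemma gp_comm (hS : IsGenSet S) (x y : Γ) : gp S 1 x y = gp S 1 y x := by
  have : wdist S x y = wdist S y x := by
    rw [wdist_eq, wdist_eq, ← wl_inv hS (x⁻¹ * y)]
    simp [mul_inv_rev]
  simp only [gp, this]
  ring

private lemma convInf_interleave (hS : IsGenSet S) {u v : ℕ → Γ} (hu : ConvInf S u)
    (hv : ConvInf S v)
    (huv : Tendsto (fun p : ℕ × ℕ => gp S 1 (u p.1) (v p.2)) atTop atTop) :
    ConvInf S fun n => if Even n then u (n / 2) else v (n / 2) := by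
  have hvu : Tendsto (fun p : ℕ × ℕ => gp S 1 (v p.1) (u p.2)) atTop atTop := by
    have hswap : Tendsto (fun p : ℕ × ℕ => (p.2, p.1)) (atTop : Filter (ℕ × ℕ)) atTop := by
      rw [← prod_atTop_atTop_eq]
      exact Tendsto.prodMk tendsto_snd tendsto_fst
    have := huv.comp hswap
    refine this.congr fun p => ?_
    exact (gp_comm hS _ _)
  rw [ConvInf, tendsto_atTop]
  intro C
  obtain ⟨a1, h1⟩ := eventually_atTop.1 (tendsto_atTop.1 hu C)
  obtain ⟨a2, h2⟩ := eventually_atTop.1 (tendsto_atTop.1 hv C)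
  obtain ⟨a3, h3⟩ := eventually_atTop.1 (tendsto_atTop.1 huv C)
  obtain ⟨a4, h4⟩ := eventually_atTop.1 (tendsto_atTop.1 hvu C)
  set N := max (max a1.1 a1.2) (max (max a2.1 a2.2) (max (max a3.1 a3.2) (max a4.1 a4.2))) with hN
  refine eventually_atTop.2 ⟨(2 * N + 2, 2 * N + 2), fun p hp => ?_⟩
  have hp1 : 2 * N + 2 ≤ p.1 := hp.1
  have hp2 : 2 * N + 2 ≤ p.2 := hp.2
  have hd1 : N ≤ p.1 / 2 := by omega
  have hd2 : N ≤ p.2 / 2 := by omega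
  by_cases e1 : Even p.1 <;> by_cases e2 : Even p.2 <;> simp only [e1, e2, if_pos, if_neg, if_true, if_false]
  · exact h1 (p.1 / 2, p.2 / 2) ⟨by omega, by omega⟩
  · exact h3 (p.1 / 2, p.2 / 2) ⟨by omega, by omega⟩
  · exact h4 (p.1 / 2, p.2 / 2) ⟨by omega, by omega⟩
  · exact h2 (p.1 / 2, p.2 / 2) ⟨by omega, by omega⟩

private lemma tendsto_of_interleave {F : Γ → ℝ} {u v : ℕ → Γ} {c : ℝ}
    (h : Tendsto (fun n => F ((fun m => if Even m then u (m / 2) else v (m / 2)) n))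
      atTop (𝓝 c)) :
    Tendsto (fun n => F (u n)) atTop (𝓝 c) ∧ Tendsto (fun n => F (v n)) atTop (𝓝 c) := by
  constructor
  · have h2 : Tendsto (fun n : ℕ => 2 * n) atTop atTop :=
      StrictMono.tendsto_atTop (fun a b hab => by omega)
    have := h.comp h2
    refine this.congr fun n => ?_
    have he : Even (2 * n) := ⟨n, two_mul n⟩
    have hn : 2 * n / 2 = n := by omega
    simp only [Function.comp_apply, he, if_true, if_pos, hn]
  · have h2 : Tendsto (fun n : ℕ => 2 * n + 1) atTop atTop :=
      StrictMono.tendsto_atTop (fun a b hab => by omega)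
    have := h.comp h2
    refine this.congr fun n => ?_
    have he : ¬ Even (2 * n + 1) := by
      simp [Nat.even_add_one, parity_simps]
    have hn : (2 * n + 1) / 2 = n := by omega
    simp only [Function.comp_apply, he, if_false, if_neg, not_false_iff, hn]

end WordLength

section Geometry

variable {Γ : Type} [Group Γ] {S : Set Γ}

private lemma wdist_triangle (hS : IsGenSet S) (x y z : Γ) :
    wdist S x z ≤ wdist S x y + wdist S y z := by
  have h := wl_mul_le hS (x⁻¹ * y) (y⁻¹ * z)
  rw [show (x⁻¹ * y) * (y⁻¹ * z) = x⁻¹ * z by group] at h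
  simpa [wdist_eq] using h

private lemma wdist_symm (hS : IsGenSet S) (x y : Γ) : wdist S x y = wdist S y x := by
  rw [wdist_eq, wdist_eq, ← wl_inv hS (x⁻¹ * y)]
  congr 1
  group

private lemma wl_eq_zero (hS : IsGenSet S) {x : Γ} (h : wl S x = 0) : x = 1 := by
  obtain ⟨w, hl, -, hp⟩ := wl_spec hS x
  rw [h, List.length_eq_zero_iff] at hl
  rw [← hp, hl, List.prod_nil]

private lemma ball_finite (hS : IsGenSet S) : ∀ M : ℕ, {x : Γ | wl S x ≤ M}.Finite
  | 0 => by
      refine Set.Finite.subset (Set.finite_singleton 1) fun x hx => ?_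
      have : wl S x = 0 := Nat.le_zero.1 hx
      simp [wl_eq_zero hS this]
  | M + 1 => by
      have hstep : {x : Γ | wl S x ≤ M + 1} ⊆
          {(1 : Γ)} ∪ ⋃ s ∈ S, (fun y => s * y) '' {x : Γ | wl S x ≤ M} := by
        intro x hx
        obtain ⟨w, hl, hw, hp⟩ := wl_spec hS x
        match w, hl, hp with
        | [], hl, hp => exact Or.inl (by simp [← hp])
        | s :: t, hl, hp =>
            refine Or.inr ?_
            refine Set.mem_biUnion (hw s List.mem_cons_self) ?_
            refine ⟨t.prod, ?_, by rw [← hp, List.prod_cons]⟩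
            have h1 : wl S t.prod ≤ t.length := wl_le t fun a ha => hw a (List.mem_cons_of_mem s ha)
            have h2 : t.length ≤ M := by
              have hx' : wl S x ≤ M + 1 := hx
              have hll : t.length + 1 = wl S x := by simpa using hl
              omega
            exact le_trans h1 h2
      exact Set.Finite.subset
        ((Set.finite_singleton 1).union
          (Set.Finite.biUnion hS.1 fun s _ => (ball_finite hS M).image _)) hstep

private lemma pow_wl_tendsto (hS : IsGenSet S) {g : Γ} (hg : ¬ IsOfFinOrder g) :
    Tendsto (fun n => wl S (g ^ n)) atTop atTop := by
  rw [tendsto_atTop_atTop]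
  by_contra hcon
  push_neg at hcon
  obtain ⟨b, hb⟩ := hcon
  have hinf : {n : ℕ | wl S (g ^ n) < b}.Infinite := by
    intro hfin
    obtain ⟨N, hN⟩ := hfin.bddAbove
    obtain ⟨a, ha, hab⟩ := hb (N + 1)
    have : a ≤ N := hN hab
    omega
  have hmap : Set.MapsTo (fun n => g ^ n) {n : ℕ | wl S (g ^ n) < b}
      {x : Γ | wl S x ≤ b} := by
    intro n hn
    simp only [Set.mem_setOf_eq] at hn ⊢
    exact le_of_lt hn
  obtain ⟨m, -, n, -, hmn, he⟩ := hinf.exists_ne_map_eq_of_mapsTo hmap (ball_finite hS b)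
  apply hg
  rcases Nat.lt_or_ge m n with h | h
  · refine isOfFinOrder_iff_pow_eq_one.2 ⟨n - m, by omega, ?_⟩
    have e1 : g ^ (n - m) * g ^ m = g ^ n := by rw [← pow_add]; congr 1; omega
    have e2 : g ^ (n - m) * g ^ m = g ^ m := by rw [he] at e1 ⊢; exact e1
    exact mul_right_cancel (e2.trans (one_mul (g ^ m)).symm)
  · have h' : n < m := by omega
    refine isOfFinOrder_iff_pow_eq_one.2 ⟨m - n, by omega, ?_⟩
    have e1 : g ^ (m - n) * g ^ n = g ^ m := by rw [← pow_add]; congr 1; omega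
    have e2 : g ^ (m - n) * g ^ n = g ^ n := by rw [← he] at e1 ⊢; exact e1
    exact mul_right_cancel (e2.trans (one_mul (g ^ n)).symm)

/-- prefix distances along a geodesic word -/
private lemma prefix_le (hS : IsGenSet S) {w : List Γ} (hw : ∀ x ∈ w, x ∈ S)
    {R R' : ℕ} (h1 : R ≤ R') (h2 : R' ≤ w.length) :
    wdist S ((w.take R).prod) ((w.take R').prod) ≤ R' - R := by
  have hsplit : w.take R' = w.take R ++ (w.drop R).take (R' - R) := by
    rw [← List.take_add]
    congr 1
    omega
  have hprod : ((w.take R).prod)⁻¹ * (w.take R').prod = ((w.drop R).take (R' - R)).prod := by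
    rw [hsplit, List.prod_append]
    group
  rw [wdist_eq, hprod]
  have hlen : ((w.drop R).take (R' - R)).length = R' - R := by
    rw [List.length_take, List.length_drop]
    omega
  have := wl_le ((w.drop R).take (R' - R)) fun a ha =>
    hw a (List.drop_subset R w (List.take_subset _ _ ha))
  omega

private lemma prefix_dist (hS : IsGenSet S) {w : List Γ} (hw : ∀ x ∈ w, x ∈ S)
    (hgeo : wl S w.prod = w.length) {R R' : ℕ} (h1 : R ≤ R') (h2 : R' ≤ w.length) :
    wdist S ((w.take R).prod) ((w.take R').prod) = R' - R := by
  refine le_antisymm (prefix_le hS hw h1 h2) ?_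
  have t1 : wl S w.prod = wdist S ((w.take 0).prod) ((w.take w.length).prod) := by
    simp [wdist_eq, List.take_length]
  have t2 : wdist S ((w.take 0).prod) ((w.take w.length).prod)
      ≤ wdist S ((w.take 0).prod) ((w.take R).prod)
        + wdist S ((w.take R).prod) ((w.take R').prod)
        + wdist S ((w.take R').prod) ((w.take w.length).prod) :=
    le_trans (wdist_triangle hS _ ((w.take R').prod) _)
      (Nat.add_le_add_right (wdist_triangle hS _ ((w.take R).prod) _) _)
  have t3 : wdist S ((w.take 0).prod) ((w.take R).prod) ≤ R - 0 :=
    prefix_le hS hw (Nat.zero_le R) (le_trans h1 h2)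
  have t4 : wdist S ((w.take R').prod) ((w.take w.length).prod) ≤ w.length - R' :=
    prefix_le hS hw h2 le_rfl
  omega

end Geometry

section Chain

variable {Γ : Type} [Group Γ] {S : Set Γ} {δ : ℝ}

private lemma gp4 (hδ : IsHyperbolic S δ) (hS : IsGenSet S) (x y z : Γ) :
    min (gp S 1 x z) (gp S 1 z y) - δ ≤ gp S 1 x y := by
  have h := hδ.2 x y z
  rwa [gp_comm hS y z] at h

private lemma prefix_gp (hS : IsGenSet S) {w : List Γ} (hw : ∀ x ∈ w, x ∈ S)
    (hgeo : wl S w.prod = w.length) {R : ℕ} (h2 : R ≤ w.length) :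
    gp S 1 ((w.take R).prod) w.prod = R := by
  have e0 : (w.take 0).prod = (1 : Γ) := by simp
  have d1 : wdist S ((w.take R).prod) 1 = R := by
    rw [wdist_symm hS]
    have h := prefix_dist hS hw hgeo (Nat.zero_le R) h2
    rw [e0] at h
    omega
  have d2 : wdist S w.prod 1 = w.length := by
    rw [wdist_symm hS]
    have h := prefix_dist hS hw hgeo (Nat.zero_le w.length) le_rfl
    rw [e0, List.take_length] at h
    omega
  have d3 : wdist S ((w.take R).prod) w.prod = w.length - R := by
    have := prefix_dist hS hw hgeo h2 le_rfl
    rwa [List.take_length] at this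
  rw [gp, d1, d2, d3]
  rw [Nat.cast_sub h2]
  ring

private lemma chain_exists (hS : IsGenSet S) (hδ : IsHyperbolic S δ) {g : Γ}
    (hg : ¬ IsOfFinOrder g) :
    ∃ (φ : ℕ → ℕ) (ρ : ℕ → Γ), ρ 0 = 1 ∧
      (∀ u v : ℕ, u ≤ v → wdist S (ρ u) (ρ v) = v - u) ∧
      (∀ s j : ℕ, s ≤ j → gp S 1 (ρ s) (g ^ φ j) = s) ∧
      (∀ i j : ℕ, (min i j : ℝ) - δ ≤ gp S 1 (g ^ φ i) (g ^ φ j)) := by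
  classical
  have hword : ∀ n : ℕ, ∃ w : List Γ, w.length = wl S (g ^ n) ∧
      (∀ x ∈ w, x ∈ S) ∧ w.prod = g ^ n := fun n => wl_spec hS (g ^ n)
  choose w hwlen hwmem hwprod using hword
  have hwgeo : ∀ n, wl S ((w n).prod) = (w n).length := by
    intro n; rw [hwprod, hwlen]
  set π : ℕ → ℕ → Γ := fun R n => ((w n).take R).prod with hπ
  set Q : ℕ → Set ℕ → Prop := fun R A => A.Infinite ∧
    (∀ m ∈ A, ∀ n ∈ A, π R m = π R n) ∧ ∀ n ∈ A, R ≤ wl S (g ^ n) with hQ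
  have hQ0 : Q 0 Set.univ := by
    refine ⟨Set.infinite_univ, fun m _ n _ => ?_, fun n _ => Nat.zero_le _⟩
    simp [hπ]
  have hstep : ∀ R A, Q R A → ∃ A', A' ⊆ A ∧ Q (R + 1) A' := by
    intro R A hA
    obtain ⟨hAinf, hAfib, hAlen⟩ := hA
    have hcof : {n : ℕ | wl S (g ^ n) ≤ R}.Finite := by
      have h := pow_wl_tendsto hS hg
      rw [tendsto_atTop_atTop] at h
      obtain ⟨N, hN⟩ := h (R + 1)
      refine Set.Finite.subset (Set.finite_Iio N) fun n hn => ?_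
      simp only [Set.mem_setOf_eq] at hn
      simp only [Set.mem_Iio]
      by_contra hc
      have := hN n (by omega)
      omega
    have heq : A ∩ {n | R + 1 ≤ wl S (g ^ n)} = A \ {n | wl S (g ^ n) ≤ R} := by
      ext n
      simp only [Set.mem_inter_iff, Set.mem_diff, Set.mem_setOf_eq]
      constructor
      · rintro ⟨h1, h2⟩; exact ⟨h1, by omega⟩
      · rintro ⟨h1, h2⟩; exact ⟨h1, by omega⟩
    have hA1inf : (A ∩ {n | R + 1 ≤ wl S (g ^ n)}).Infinite := by
      rw [heq]; exact hAinf.diff hcof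
    have hmaps : ∀ n ∈ A ∩ {n | R + 1 ≤ wl S (g ^ n)},
        π (R + 1) n ∈ {x : Γ | wl S x ≤ R + 1} := by
      intro n _
      have h1 : wl S (((w n).take (R + 1)).prod) ≤ ((w n).take (R + 1)).length :=
        wl_le _ fun x hx => hwmem n x (List.take_subset _ _ hx)
      have h2 : ((w n).take (R + 1)).length ≤ R + 1 := by
        rw [List.length_take]; omega
      simp only [Set.mem_setOf_eq, hπ]
      omega
    have hfib : ∃ v : Γ,
        ((A ∩ {n | R + 1 ≤ wl S (g ^ n)}) ∩ {n | π (R + 1) n = v}).Infinite := by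
      by_contra hcon
      push_neg at hcon
      have hsub : A ∩ {n | R + 1 ≤ wl S (g ^ n)} ⊆
          ⋃ v ∈ {x : Γ | wl S x ≤ R + 1},
            ((A ∩ {n | R + 1 ≤ wl S (g ^ n)}) ∩ {n | π (R + 1) n = v}) := by
        intro n hn
        exact Set.mem_biUnion (hmaps n hn) ⟨hn, rfl⟩
      have hfin := Set.Finite.biUnion (ball_finite hS (R + 1)) fun v _ => hcon v
      exact hA1inf (hfin.subset hsub)
    obtain ⟨v, hv⟩ := hfib
    refine ⟨(A ∩ {n | R + 1 ≤ wl S (g ^ n)}) ∩ {n | π (R + 1) n = v}, ?_, hv, ?_, ?_⟩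
    · intro n hn; exact hn.1.1
    · intro m hm n hn
      have h1 : π (R + 1) m = v := hm.2
      have h2 : π (R + 1) n = v := hn.2
      rw [h1, h2]
    · intro n hn; exact hn.1.2
  choose F hF using hstep
  let c : ∀ _ : ℕ, {A : Set ℕ // Q _ A} := fun R =>
    Nat.rec (motive := fun R => {A : Set ℕ // Q R A}) ⟨Set.univ, hQ0⟩
      (fun R p => ⟨F R p.1 p.2, (hF R p.1 p.2).2⟩) R
  have hcsub : ∀ R, (c (R + 1)).1 ⊆ (c R).1 := fun R => (hF R (c R).1 (c R).2).1
  have hcmono : ∀ {u v : ℕ}, u ≤ v → (c v).1 ⊆ (c u).1 := by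
    intro u v huv
    induction v, huv using Nat.le_induction with
    | base => exact subset_rfl
    | succ v hv ih => exact Set.Subset.trans (hcsub v) ih
  have hne : ∀ R, ((c R).1).Nonempty := fun R => ((c R).2).1.nonempty
  set φ : ℕ → ℕ := fun R => (hne R).some with hφ
  have hφmem : ∀ R, φ R ∈ (c R).1 := fun R => (hne R).some_mem
  set ρ : ℕ → Γ := fun R => π R (φ R) with hρ
  have hcoh : ∀ {s j : ℕ}, s ≤ j → π s (φ j) = ρ s := by
    intro s j hsj
    have h1 : φ j ∈ (c s).1 := hcmono hsj (hφmem j)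
    exact ((c s).2).2.1 (φ j) h1 (φ s) (hφmem s)
  have halen : ∀ R, R ≤ wl S (g ^ φ R) := fun R => ((c R).2).2.2 (φ R) (hφmem R)
  have hρ0 : ρ 0 = 1 := by simp [hρ, hπ]
  have hgeod : ∀ u v : ℕ, u ≤ v → wdist S (ρ u) (ρ v) = v - u := by
    intro u v huv
    have e1 : ρ u = π u (φ v) := (hcoh huv).symm
    rw [e1]
    exact prefix_dist hS (hwmem (φ v)) (hwgeo (φ v)) huv
      (by rw [hwlen]; exact halen v)
  have hray : ∀ s j : ℕ, s ≤ j → gp S 1 (ρ s) (g ^ φ j) = s := by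
    intro s j hsj
    have e1 : ρ s = π s (φ j) := (hcoh hsj).symm
    rw [e1, ← hwprod (φ j)]
    exact prefix_gp hS (hwmem (φ j)) (hwgeo (φ j))
      (by rw [hwlen]; exact le_trans hsj (halen j))
  have horb : ∀ i j : ℕ, (min i j : ℝ) - δ ≤ gp S 1 (g ^ φ i) (g ^ φ j) := by
    intro i j
    have h1 : gp S 1 (g ^ φ i) (ρ (min i j)) = (min i j : ℕ) := by
      rw [gp_comm hS]; exact hray (min i j) i (min_le_left _ _)
    have h2 : gp S 1 (ρ (min i j)) (g ^ φ j) = (min i j : ℕ) := hray (min i j) j (min_le_right _ _)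
    have h3 := gp4 hδ hS (g ^ φ i) (g ^ φ j) (ρ (min i j))
    rw [h1, h2, min_self] at h3
    rwa [Nat.cast_min] at h3
  exact ⟨φ, ρ, hρ0, hgeod, hray, horb⟩

end Chain

section Busemann

variable {Γ : Type} [Group Γ] {S : Set Γ} {δ : ℝ} {g : Γ} {φ : ℕ → ℕ} {ρ : ℕ → Γ}

/-- the properties of the ray/subsequence produced by `chain_exists` -/
private structure RayData (S : Set Γ) (δ : ℝ) (g : Γ) (φ : ℕ → ℕ) (ρ : ℕ → Γ) : Prop where
  zero : ρ 0 = 1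
  geod : ∀ u v : ℕ, u ≤ v → wdist S (ρ u) (ρ v) = v - u
  ray : ∀ s j : ℕ, s ≤ j → gp S 1 (ρ s) (g ^ φ j) = s
  orb : ∀ i j : ℕ, (min i j : ℝ) - δ ≤ gp S 1 (g ^ φ i) (g ^ φ j)

private lemma RayData.norm (hS : IsGenSet S) (RD : RayData S δ g φ ρ) (s : ℕ) :
    wdist S (ρ s) 1 = s := by
  rw [wdist_symm hS, ← RD.zero]
  simpa using RD.geod 0 s (Nat.zero_le s)

/-- Gromov products between two points of the ray -/
private lemma RayData.raygp (hS : IsGenSet S) (RD : RayData S δ g φ ρ)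
    {u v : ℕ} (h : u ≤ v) : gp S 1 (ρ u) (ρ v) = u := by
  rw [gp, RD.norm hS, RD.norm hS, RD.geod u v h, Nat.cast_sub h]
  ring

/-- the (integral) Busemann function along the ray -/
private lemma buse_exists (hS : IsGenSet S) (RD : RayData S δ g φ ρ) :
    ∃ (β : Γ → ℤ) (sβ : Γ → ℕ),
      (∀ z : Γ, ∀ s : ℕ, sβ z ≤ s → (s : ℤ) - wdist S z (ρ s) = β z) ∧
      (∀ z : Γ, ∀ s : ℕ, (s : ℤ) - wdist S z (ρ s) ≤ β z) ∧
      β 1 = 0 ∧ (∀ z : Γ, β z ≤ wdist S z 1) := by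
  have hmono : ∀ (z : Γ) (s t : ℕ), s ≤ t →
      (s : ℤ) - wdist S z (ρ s) ≤ (t : ℤ) - wdist S z (ρ t) := by
    intro z s t hst
    have h1 : wdist S z (ρ t) ≤ wdist S z (ρ s) + wdist S (ρ s) (ρ t) :=
      wdist_triangle hS z (ρ s) (ρ t)
    have h2 : wdist S (ρ s) (ρ t) = t - s := RD.geod s t hst
    have : (wdist S z (ρ t) : ℤ) ≤ wdist S z (ρ s) + (t - s : ℕ) := by exact_mod_cast h1.trans (by omega)
    have h3 : ((t - s : ℕ) : ℤ) = (t : ℤ) - s := by omega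
    omega
  have hub : ∀ (z : Γ) (s : ℕ), (s : ℤ) - wdist S z (ρ s) ≤ wdist S z 1 := by
    intro z s
    have h1 : wdist S (ρ s) 1 ≤ wdist S (ρ s) z + wdist S z 1 := wdist_triangle hS _ z _
    have h2 : wdist S (ρ s) 1 = s := RD.norm hS s
    have h3 : wdist S (ρ s) z = wdist S z (ρ s) := (wdist_symm hS _ _).symm
    rw [h2, h3] at h1
    have : (s : ℤ) ≤ (wdist S z (ρ s) : ℤ) + wdist S z 1 := by exact_mod_cast h1
    omega
  have hmax : ∀ z : Γ, ∃ b : ℤ, (∃ s : ℕ, (s : ℤ) - wdist S z (ρ s) = b) ∧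
      ∀ s : ℕ, (s : ℤ) - wdist S z (ρ s) ≤ b := by
    intro z
    obtain ⟨b, ⟨⟨s₀, hs₀⟩, hbub⟩⟩ := Int.exists_greatest_of_bdd
      (P := fun t : ℤ => ∃ s : ℕ, (s : ℤ) - wdist S z (ρ s) = t)
      ⟨(wdist S z 1 : ℤ), fun t ht => by obtain ⟨s, hs⟩ := ht; rw [← hs]; exact hub z s⟩
      ⟨(0 : ℤ) - wdist S z (ρ 0), 0, rfl⟩
    exact ⟨b, ⟨s₀, hs₀⟩, fun s => hbub _ ⟨s, rfl⟩⟩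
  choose β hβ1 hβ2 using hmax
  choose sβ hsβ using hβ1
  refine ⟨β, sβ, ?_, fun z s => hβ2 z _ , ?_, ?_⟩
  · intro z s hs
    refine le_antisymm (hβ2 z _) ?_
    rw [← hsβ z]
    exact hmono z (sβ z) s hs
  · rw [← hsβ 1]
    have : wdist S (1 : Γ) (ρ (sβ 1)) = sβ 1 := by
      rw [wdist_symm hS]; exact RD.norm hS _
    omega
  · intro z
    rw [← hsβ z]
    exact hub z (sβ z)

end Busemann

section Busemann2

variable {Γ : Type} [Group Γ] {S : Set Γ} {δ : ℝ} {g : Γ} {φ : ℕ → ℕ} {ρ : ℕ → Γ}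

private lemma wdist_left (S : Set Γ) (q a b : Γ) : wdist S (q * a) (q * b) = wdist S a b := by
  rw [wdist_eq, wdist_eq]
  congr 1
  group

/-- asymptotic rays: for `q` commuting with `g`, the products of `q·ρ` with `ρ` blow up -/
private lemma asym_comm (hS : IsGenSet S) (hδ : IsHyperbolic S δ) (RD : RayData S δ g φ ρ)
    (q : Γ) (hq : q * g = g * q) :
    ∀ C : ℝ, ∃ N : ℕ, ∀ U V : ℕ, N ≤ U → N ≤ V → C ≤ gp S 1 (q * ρ V) (ρ U) := by
  intro C
  have hδ0 : 0 ≤ δ := hδ.1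
  refine ⟨⌈C + 5 * δ + (wl S q : ℝ) + 3⌉₊, fun U V hU hV => ?_⟩
  set N := ⌈C + 5 * δ + (wl S q : ℝ) + 3⌉₊ with hN
  have hNval : C + 5 * δ + (wl S q : ℝ) + 3 ≤ N := Nat.le_ceil _
  have hUr : C + 5 * δ + (wl S q : ℝ) + 3 ≤ (U : ℝ) := le_trans hNval (by exact_mod_cast hU)
  have hVr : C + 5 * δ + (wl S q : ℝ) + 3 ≤ (V : ℝ) := le_trans hNval (by exact_mod_cast hV)
  set j := max V N with hj
  set j' := max U N with hj'
  have t1 : gp S 1 (ρ V) (g ^ φ j) - ((wl S q : ℝ) + wl S (1:Γ) + wl S (1:Γ))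
      ≤ gp S 1 (q * ρ V) (q * g ^ φ j) := by
    have := gp_conj_ge hS q 1 1 (ρ V) (g ^ φ j)
    simpa [mul_one] using this
  have t1' : (V : ℝ) - wl S q ≤ gp S 1 (q * ρ V) (q * g ^ φ j) := by
    rw [RD.ray V j (le_max_left _ _), wl_one] at t1
    simp only [Nat.cast_zero] at t1
    linarith
  have hcomm : q * g ^ φ j = g ^ φ j * q := by
    have hc : Commute q g := hq
    exact (hc.pow_right (φ j)).eq
  have t2 : gp S 1 (g ^ φ j) (g ^ φ j') - ((wl S (1:Γ) : ℝ) + wl S q + wl S (1:Γ))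
      ≤ gp S 1 (g ^ φ j * q) (g ^ φ j') := by
    have := gp_conj_ge hS 1 q 1 (g ^ φ j) (g ^ φ j')
    simpa [one_mul, mul_one] using this
  have t2' : min (j:ℝ) (j':ℝ) - δ - wl S q ≤ gp S 1 (q * g ^ φ j) (g ^ φ j') := by
    rw [hcomm]
    have horb := RD.orb j j'
    rw [wl_one] at t2
    simp only [Nat.cast_zero] at t2
    linarith
  have t3 : gp S 1 (g ^ φ j') (ρ U) = U := by
    rw [gp_comm hS]
    exact RD.ray U j' (le_max_left _ _)
  have hNj : (N : ℝ) ≤ min (j : ℝ) (j' : ℝ) := by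
    have h1 : (N:ℝ) ≤ (j:ℝ) := by exact_mod_cast le_max_right V N
    have h2 : (N:ℝ) ≤ (j':ℝ) := by exact_mod_cast le_max_right U N
    exact le_min h1 h2
  have c1 := gp4 hδ hS (q * ρ V) (g ^ φ j') (q * g ^ φ j)
  have c2 := gp4 hδ hS (q * ρ V) (ρ U) (g ^ φ j')
  have hwq : (0:ℝ) ≤ wl S q := by positivity
  rw [t3] at c2
  have hminN : C + 5 * δ + wl S q + 3 ≤ min (j:ℝ) (j':ℝ) := le_trans hNval hNj
  have hm1 : C + 2 * δ ≤ gp S 1 (q * ρ V) (g ^ φ j') := by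
    have hmin : C + 3 * δ ≤ min (gp S 1 (q * ρ V) (q * g ^ φ j))
        (gp S 1 (q * g ^ φ j) (g ^ φ j')) := by
      have hminj1 : min (j:ℝ) (j':ℝ) ≤ (j:ℝ) := min_le_left _ _
      have hminj2 : min (j:ℝ) (j':ℝ) ≤ (j':ℝ) := min_le_right _ _
      refine le_min (by linarith) (by linarith)
    have := min_le_left (gp S 1 (q * ρ V) (q * g ^ φ j)) (gp S 1 (q * g ^ φ j) (g ^ φ j'))
    have := min_le_right (gp S 1 (q * ρ V) (q * g ^ φ j)) (gp S 1 (q * g ^ φ j) (g ^ φ j'))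
    linarith
  have hmin2 : C + δ ≤ min (gp S 1 (q * ρ V) (g ^ φ j')) ((U:ℝ)) := by
    refine le_min (by linarith) (by linarith)
  linarith

/-- the shift lemma -/
private lemma shift_lemma (hS : IsGenSet S) (hδ : IsHyperbolic S δ) (RD : RayData S δ g φ ρ)
    (β : Γ → ℤ) (sβ : Γ → ℕ)
    (hβeq : ∀ z : Γ, ∀ s : ℕ, sβ z ≤ s → (s : ℤ) - wdist S z (ρ s) = β z)
    (x : Γ)
    (hax : ∀ C : ℝ, ∃ N : ℕ, ∀ U V : ℕ, N ≤ U → N ≤ V → C ≤ gp S 1 (x⁻¹ * ρ V) (ρ U)) :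
    ∃ V₀ : ℕ, ∀ v : ℕ, V₀ ≤ v → ∃ w : ℕ,
      |(w : ℝ) - ((v : ℝ) - β x)| ≤ δ + 1 ∧
      (wdist S (x⁻¹ * ρ v) (ρ w) : ℝ) ≤ 3 * δ + 1 := by
  have hδ0 : 0 ≤ δ := hδ.1
  refine ⟨max (sβ x) ⌈(β x : ℝ) + δ + 1⌉₊, fun v hv => ?_⟩
  have hv1 : sβ x ≤ v := le_trans (le_max_left _ _) hv
  have hv2 : (β x : ℝ) + δ + 1 ≤ v := by
    refine le_trans (Nat.le_ceil _) ?_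
    exact_mod_cast le_trans (le_max_right _ _) hv
  have hnd : ∀ t : ℕ, sβ x ≤ t → (wdist S (x⁻¹ * ρ t) 1 : ℝ) = (t : ℝ) - β x := by
    intro t ht
    have e1 : wdist S (x⁻¹ * ρ t) 1 = wdist S x (ρ t) := by
      rw [wdist_eq, wdist_eq, mul_one, wl_inv hS]
    have e2 := hβeq x t ht
    have e3 : (wdist S x (ρ t) : ℤ) = (t : ℤ) - β x := by omega
    rw [e1]
    exact_mod_cast e3
  have t1 : ∀ V : ℕ, sβ x ≤ V → v ≤ V →
      gp S 1 (x⁻¹ * ρ v) (x⁻¹ * ρ V) = (v : ℝ) - β x := by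
    intro V h1 h2
    rw [gp, hnd v hv1, hnd V h1, wdist_left, RD.geod v V h2, Nat.cast_sub h2]
    ring
  obtain ⟨N₁, hN₁⟩ := hax ((v : ℝ) - β x)
  set p : ℝ := (v : ℝ) - β x - δ with hp
  have hp1 : 1 ≤ p := by
    have : (β x : ℝ) + δ + 1 ≤ v := hv2
    simp only [hp]
    linarith
  set w : ℕ := ⌊p⌋₊ with hw
  have hwle : (w : ℝ) ≤ p := Nat.floor_le (by linarith)
  have hwgt : p - 1 < w := Nat.sub_one_lt_floor p
  set U := max (max w v) (max N₁ (sβ x)) with hU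
  have hUw : w ≤ U := le_trans (le_max_left _ _) (le_max_left _ _)
  have hUv : v ≤ U := le_trans (le_max_right _ _) (le_max_left _ _)
  have hUN : N₁ ≤ U := le_trans (le_max_left _ _) (le_max_right _ _)
  have hUs : sβ x ≤ U := le_trans (le_max_right _ _) (le_max_right _ _)
  have key : p ≤ gp S 1 (x⁻¹ * ρ v) (ρ U) := by
    have c := gp4 hδ hS (x⁻¹ * ρ v) (ρ U) (x⁻¹ * ρ U)
    rw [t1 U hUs hUv] at c
    have h2 := hN₁ U U hUN hUN
    have hmin : (v:ℝ) - β x ≤ min ((v:ℝ) - β x) (gp S 1 (x⁻¹ * ρ U) (ρ U)) :=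
      le_min le_rfl h2
    simp only [hp]
    linarith
  have prj : (w : ℝ) - δ ≤ gp S 1 (x⁻¹ * ρ v) (ρ w) := by
    have c := gp4 hδ hS (x⁻¹ * ρ v) (ρ w) (ρ U)
    have e1 : gp S 1 (ρ U) (ρ w) = w := by
      rw [gp_comm hS]; exact RD.raygp hS hUw
    rw [e1] at c
    have hmin : (w:ℝ) ≤ min (gp S 1 (x⁻¹ * ρ v) (ρ U)) ((w:ℝ)) :=
      le_min (by linarith) le_rfl
    linarith
  refine ⟨w, ?_, ?_⟩
  · rw [abs_le]
    constructor
    · simp only [hp] at hwgt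
      linarith
    · simp only [hp] at hwle
      linarith
  · have hgpdef : gp S 1 (x⁻¹ * ρ v) (ρ w) = ((wdist S (x⁻¹ * ρ v) 1 : ℝ)
        + (wdist S (ρ w) 1 : ℝ) - (wdist S (x⁻¹ * ρ v) (ρ w) : ℝ)) / 2 := rfl
    rw [hnd v hv1, RD.norm hS] at hgpdef
    have := prj
    rw [hgpdef] at this
    simp only [hp] at hwle hwgt
    linarith

/-- the Busemann quasi-cocycle identity -/
private lemma cocycle (hS : IsGenSet S) (hδ : IsHyperbolic S δ) (RD : RayData S δ g φ ρ)
    (β : Γ → ℤ) (sβ : Γ → ℕ)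
    (hβeq : ∀ z : Γ, ∀ s : ℕ, sβ z ≤ s → (s : ℤ) - wdist S z (ρ s) = β z)
    (x z : Γ)
    (hax : ∀ C : ℝ, ∃ N : ℕ, ∀ U V : ℕ, N ≤ U → N ≤ V → C ≤ gp S 1 (x⁻¹ * ρ V) (ρ U)) :
    |(β (x * z) : ℝ) - β z - β x| ≤ 4 * δ + 2 := by
  have hδ0 : 0 ≤ δ := hδ.1
  obtain ⟨V₀, hV₀⟩ := shift_lemma hS hδ RD β sβ hβeq x hax
  set s := max V₀ (max (sβ (x * z)) ⌈(β x : ℝ) + δ + 2 + (sβ z : ℝ)⌉₊) with hs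
  obtain ⟨w, hw1, hw2⟩ := hV₀ s (le_max_left _ _)
  have hsβxz : sβ (x * z) ≤ s := le_trans (le_max_left _ _) (le_max_right _ _)
  have hsr : (β x : ℝ) + δ + 2 + (sβ z : ℝ) ≤ s := by
    refine le_trans (Nat.le_ceil _) ?_
    exact_mod_cast le_trans (le_max_right _ _) (le_max_right _ _)
  have hwβz : sβ z ≤ w := by
    have h1 : (s : ℝ) - β x - (δ + 1) ≤ w := by
      rw [abs_le] at hw1
      linarith [hw1.1]
    have : (sβ z : ℝ) ≤ w := by linarith
    exact_mod_cast this
  have e1 : (β (x * z) : ℝ) = (s : ℝ) - (wdist S (x * z) (ρ s) : ℝ) := by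
    have := hβeq (x * z) s hsβxz
    have h2 : (wdist S (x*z) (ρ s) : ℤ) = (s : ℤ) - β (x*z) := by omega
    have h3 : (wdist S (x*z) (ρ s) : ℝ) = (s : ℝ) - (β (x*z) : ℝ) := by exact_mod_cast h2
    linarith
  have e2 : wdist S (x * z) (ρ s) = wdist S z (x⁻¹ * ρ s) := by
    rw [wdist_eq, wdist_eq]
    congr 1
    group
  have e3 : |(wdist S z (x⁻¹ * ρ s) : ℝ) - (wdist S z (ρ w) : ℝ)| ≤ 3 * δ + 1 := by
    have tr1 : wdist S z (x⁻¹ * ρ s) ≤ wdist S z (ρ w) + wdist S (ρ w) (x⁻¹ * ρ s) :=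
      wdist_triangle hS _ _ _
    have tr2 : wdist S z (ρ w) ≤ wdist S z (x⁻¹ * ρ s) + wdist S (x⁻¹ * ρ s) (ρ w) :=
      wdist_triangle hS _ _ _
    have hsymm : wdist S (ρ w) (x⁻¹ * ρ s) = wdist S (x⁻¹ * ρ s) (ρ w) := wdist_symm hS _ _
    rw [hsymm] at tr1
    have tr1' : (wdist S z (x⁻¹ * ρ s) : ℝ) ≤ wdist S z (ρ w) + wdist S (x⁻¹ * ρ s) (ρ w) := by
      exact_mod_cast tr1
    have tr2' : (wdist S z (ρ w) : ℝ) ≤ wdist S z (x⁻¹ * ρ s) + wdist S (x⁻¹ * ρ s) (ρ w) := by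
      exact_mod_cast tr2
    rw [abs_le]
    constructor <;> linarith
  have e4 : (wdist S z (ρ w) : ℝ) = (w : ℝ) - β z := by
    have := hβeq z w hwβz
    have h2 : (wdist S z (ρ w) : ℤ) = (w : ℤ) - β z := by omega
    exact_mod_cast h2
  rw [abs_le] at hw1 ⊢
  rw [e1, e2]
  rw [e4] at e3
  rw [abs_le] at e3
  constructor <;> linarith [hw1.1, hw1.2, e3.1, e3.2]

end Busemann2

section Homog

private lemma homog (u : ℕ → ℝ) (E : ℝ) (hE0 : 0 ≤ E)
    (hE : ∀ m n : ℕ, |u (m + n) - u m - u n| ≤ E) :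
    ∃ α : ℝ, ∀ n : ℕ, 1 ≤ n → |u n - n * α| ≤ E := by
  have claim1 : ∀ (n k : ℕ), |u (n * (k + 1)) - ((k : ℝ) + 1) * u n| ≤ (k : ℝ) * E := by
    intro n k
    induction k with
    | zero => simp
    | succ k ih =>
        push_cast
        rw [show n * (k + 1 + 1) = n * (k + 2) by ring,
          show ((k:ℝ) + 1 + 1) = (k:ℝ) + 2 by ring]
        have h1 : n * (k + 2) = n * (k + 1) + n := by ring
        have h2 := hE (n * (k + 1)) n
        have e : u (n * (k + 2)) - ((k : ℝ) + 1 + 1) * u n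
            = (u (n * (k + 1) + n) - u (n * (k + 1)) - u n)
              + (u (n * (k + 1)) - ((k : ℝ) + 1) * u n) := by
          rw [← h1]; ring
        have := abs_add_le (u (n * (k + 1) + n) - u (n * (k + 1)) - u n)
          (u (n * (k + 1)) - ((k : ℝ) + 1) * u n)
        push_cast
        push_cast at ih
        rw [show ((k : ℝ) + 1 + 1) = (k : ℝ) + 2 by ring] at e
        calc |u (n * (k + 2)) - ((k : ℝ) + 2) * u n|
            ≤ |u (n * (k + 1) + n) - u (n * (k + 1)) - u n|
              + |u (n * (k + 1)) - ((k : ℝ) + 1) * u n| := by rw [e]; exact this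
          _ ≤ E + (k : ℝ) * E := add_le_add h2 ih
          _ = ((k : ℝ) + 1) * E := by ring
  have claim2 : ∀ m n : ℕ, 1 ≤ m → 1 ≤ n →
      |u m / m - u n / n| ≤ E / m + E / n := by
    intro m n hm hn
    have hm0 : (0 : ℝ) < m := by exact_mod_cast hm
    have hn0 : (0 : ℝ) < n := by exact_mod_cast hn
    have h1 : |u (m * n) - (n : ℝ) * u m| ≤ ((n : ℝ) - 1) * E := by
      have := claim1 m (n - 1)
      rw [show n - 1 + 1 = n by omega] at this
      have hc : ((n - 1 : ℕ) : ℝ) = (n : ℝ) - 1 := by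
        push_cast [Nat.cast_sub hn]; ring
      rw [hc] at this
      convert this using 3
      ring
    have h2 : |u (m * n) - (m : ℝ) * u n| ≤ ((m : ℝ) - 1) * E := by
      have := claim1 n (m - 1)
      rw [show m - 1 + 1 = m by omega] at this
      have hc : ((m - 1 : ℕ) : ℝ) = (m : ℝ) - 1 := by
        push_cast [Nat.cast_sub hm]; ring
      rw [hc, Nat.mul_comm n m] at this
      convert this using 3
      ring
    have h3 : |(n : ℝ) * u m - (m : ℝ) * u n| ≤ ((m : ℝ) + n) * E := by
      have := abs_sub (u (m * n) - (m : ℝ) * u n) (u (m * n) - (n : ℝ) * u m)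
      calc |(n : ℝ) * u m - (m : ℝ) * u n|
          = |(u (m * n) - (m : ℝ) * u n) - (u (m * n) - (n : ℝ) * u m)| := by ring_nf
        _ ≤ |u (m * n) - (m : ℝ) * u n| + |u (m * n) - (n : ℝ) * u m| := abs_sub _ _
        _ ≤ ((m : ℝ) - 1) * E + ((n : ℝ) - 1) * E := add_le_add h2 h1
        _ ≤ ((m : ℝ) + n) * E := by nlinarith
    have he : u m / m - u n / n = ((n : ℝ) * u m - (m : ℝ) * u n) / (m * n) := by
      field_simp
    rw [he, abs_div]
    rw [abs_of_pos (by positivity : (0:ℝ) < (m : ℝ) * n)]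
    rw [div_le_iff₀ (by positivity)]
    calc |(n : ℝ) * u m - (m : ℝ) * u n| ≤ ((m : ℝ) + n) * E := h3
      _ = (E / m + E / n) * ((m : ℝ) * n) := by field_simp; ring
  have hcauchy : CauchySeq (fun k : ℕ => u (k + 1) / (k + 1)) := by
    rw [Metric.cauchySeq_iff]
    intro ε hε
    refine ⟨⌈2 * E / ε⌉₊, fun a ha b hb => ?_⟩
    have hN : 2 * E / ε ≤ (⌈2 * E / ε⌉₊ : ℝ) := Nat.le_ceil _
    have ha' : (⌈2 * E / ε⌉₊ : ℝ) ≤ a := by exact_mod_cast ha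
    have hb' : (⌈2 * E / ε⌉₊ : ℝ) ≤ b := by exact_mod_cast hb
    have h := claim2 (a + 1) (b + 1) (by omega) (by omega)
    rw [Real.dist_eq]
    have e1 : E / ((a : ℝ) + 1) < ε / 2 := by
      rw [div_lt_iff₀ (by positivity)]
      have : 2 * E / ε ≤ (a : ℝ) := le_trans hN ha'
      rw [div_le_iff₀ hε] at this
      nlinarith
    have e2 : E / ((b : ℝ) + 1) < ε / 2 := by
      rw [div_lt_iff₀ (by positivity)]
      have : 2 * E / ε ≤ (b : ℝ) := le_trans hN hb'
      rw [div_le_iff₀ hε] at this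
      nlinarith
    have hc : ((a + 1 : ℕ) : ℝ) = (a : ℝ) + 1 := by push_cast; ring
    have hc' : ((b + 1 : ℕ) : ℝ) = (b : ℝ) + 1 := by push_cast; ring
    rw [hc, hc'] at h
    calc |u (a + 1) / ((a:ℝ) + 1) - u (b + 1) / ((b:ℝ) + 1)|
        ≤ E / ((a:ℝ) + 1) + E / ((b:ℝ) + 1) := h
      _ < ε / 2 + ε / 2 := add_lt_add e1 e2
      _ = ε := by ring
  obtain ⟨α, hα⟩ := cauchySeq_tendsto_of_complete hcauchy
  refine ⟨α, fun n hn => ?_⟩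
  have hn0 : (0 : ℝ) < n := by exact_mod_cast hn
  have hidx : Tendsto (fun k : ℕ => n * (k + 1) - 1) atTop atTop := by
    refine tendsto_atTop_mono (fun k => ?_) tendsto_id
    have hk : k + 1 ≤ n * (k + 1) := Nat.le_mul_of_pos_left _ (by omega)
    show k ≤ n * (k + 1) - 1
    omega
  have hsub : Tendsto (fun k : ℕ => u (n * (k + 1)) / ((n : ℝ) * (k + 1))) atTop (𝓝 α) := by
    have h := hα.comp hidx
    refine h.congr fun k => ?_
    simp only [Function.comp_apply]
    have h1 : (1:ℕ) ≤ n * (k + 1) := by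
      calc (1:ℕ) ≤ k + 1 := by omega
        _ ≤ n * (k + 1) := Nat.le_mul_of_pos_left _ (by omega)
    have he : n * (k + 1) - 1 + 1 = n * (k + 1) := by omega
    rw [he]
    have hc : ((n * (k + 1) - 1 : ℕ) : ℝ) + 1 = (n : ℝ) * ((k:ℝ) + 1) := by
      rw [Nat.cast_sub h1]
      push_cast
      ring
    rw [hc]
  have hbnd : ∀ k : ℕ, |u n / n - u (n * (k + 1)) / ((n:ℝ) * ((k:ℝ) + 1))|
      ≤ E / n + E / ((n:ℝ) * ((k:ℝ) + 1)) := by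
    intro k
    have h := claim2 n (n * (k + 1)) hn
      (by calc 1 ≤ k + 1 := by omega
            _ ≤ n * (k + 1) := Nat.le_mul_of_pos_left _ (by omega))
    have hc : ((n * (k + 1) : ℕ) : ℝ) = (n : ℝ) * ((k : ℝ) + 1) := by push_cast; ring
    rwa [hc] at h
  have h1 : Tendsto (fun k : ℕ => |u n / n - u (n * (k + 1)) / ((n:ℝ) * ((k:ℝ) + 1))|)
      atTop (𝓝 |u n / n - α|) := by
    have := (tendsto_const_nhds (x := u n / (n:ℝ))).sub hsub
    exact this.abs
  have h2 : Tendsto (fun k : ℕ => E / n + E / ((n:ℝ) * ((k:ℝ) + 1))) atTop (𝓝 (E / n + 0)) := by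
    refine tendsto_const_nhds.add ?_
    have hden : Tendsto (fun k : ℕ => (n:ℝ) * ((k:ℝ) + 1)) atTop atTop := by
      refine Tendsto.const_mul_atTop hn0 ?_
      refine tendsto_atTop_add_const_right _ _ tendsto_natCast_atTop_atTop
    exact Tendsto.div_atTop tendsto_const_nhds hden
  have hle := le_of_tendsto_of_tendsto' h1 h2 hbnd
  rw [add_zero] at hle
  have : |u n - (n : ℝ) * α| = (n : ℝ) * |u n / n - α| := by
    rw [← abs_of_pos hn0, ← abs_mul]
    congr 1
    field_simp
    rw [abs_of_pos hn0]; ring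
  rw [this]
  calc (n : ℝ) * |u n / n - α| ≤ (n : ℝ) * (E / n) := by
        exact mul_le_mul_of_nonneg_left hle (le_of_lt hn0)
    _ = E := by field_simp

end Homog

section LoxoFinal

variable {Γ : Type} [Group Γ] {S : Set Γ} {δ : ℝ} {g : Γ} {φ : ℕ → ℕ} {ρ : ℕ → Γ}

private lemma finOrd_of_pow_eq {g : Γ} {m n : ℕ} (hmn : m ≠ n) (h : g ^ m = g ^ n) :
    IsOfFinOrder g := by
  rcases Nat.lt_or_ge m n with hlt | hge
  · refine isOfFinOrder_iff_pow_eq_one.2 ⟨n - m, by omega, ?_⟩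
    have e1 : g ^ (n - m) * g ^ m = g ^ n := by rw [← pow_add]; congr 1; omega
    have e2 : g ^ (n - m) * g ^ m = g ^ m := by rw [← h] at e1; exact e1
    exact mul_right_cancel (e2.trans (one_mul (g ^ m)).symm)
  · have hlt : n < m := by omega
    refine isOfFinOrder_iff_pow_eq_one.2 ⟨m - n, by omega, ?_⟩
    have e1 : g ^ (m - n) * g ^ n = g ^ m := by rw [← pow_add]; congr 1; omega
    have e2 : g ^ (m - n) * g ^ n = g ^ n := by rw [h] at e1; exact e1
    exact mul_right_cancel (e2.trans (one_mul (g ^ n)).symm)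

private lemma depth_prod (hS : IsGenSet S) (hδ : IsHyperbolic S δ) (RD : RayData S δ g φ ρ)
    (β : Γ → ℤ) (sβ : Γ → ℕ)
    (hβeq : ∀ z : Γ, ∀ s : ℕ, sβ z ≤ s → (s : ℤ) - wdist S z (ρ s) = β z)
    (hβub : ∀ z : Γ, β z ≤ wdist S z 1) (x y : Γ) :
    min ((β x : ℝ)) ((β y : ℝ)) - δ ≤ gp S 1 x y := by
  set s := max (sβ x) (sβ y) with hs
  have kx : (β x : ℝ) ≤ gp S 1 x (ρ s) := by
    have e := hβeq x s (le_max_left _ _)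
    have e2 : (wdist S x (ρ s) : ℝ) = (s : ℝ) - (β x : ℝ) := by exact_mod_cast by omega
    have e3 : (β x : ℝ) ≤ (wdist S x 1 : ℝ) := by exact_mod_cast hβub x
    have hgp : gp S 1 x (ρ s) = ((wdist S x 1 : ℝ) + (wdist S (ρ s) 1 : ℝ)
        - (wdist S x (ρ s) : ℝ)) / 2 := rfl
    rw [RD.norm hS s, e2] at hgp
    rw [hgp]
    linarith
  have ky : (β y : ℝ) ≤ gp S 1 (ρ s) y := by
    rw [gp_comm hS]
    have e := hβeq y s (le_max_right _ _)
    have e2 : (wdist S y (ρ s) : ℝ) = (s : ℝ) - (β y : ℝ) := by exact_mod_cast by omega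
    have e3 : (β y : ℝ) ≤ (wdist S y 1 : ℝ) := by exact_mod_cast hβub y
    have hgp : gp S 1 y (ρ s) = ((wdist S y 1 : ℝ) + (wdist S (ρ s) 1 : ℝ)
        - (wdist S y (ρ s) : ℝ)) / 2 := rfl
    rw [RD.norm hS s, e2] at hgp
    rw [hgp]
    linarith
  have h := gp4 hδ hS x y (ρ s)
  have : min ((β x : ℝ)) ((β y : ℝ)) ≤ min (gp S 1 x (ρ s)) (gp S 1 (ρ s) y) :=
    min_le_min kx ky
  linarith

private lemma gp_pow_inv (hS : IsGenSet S) (g : Γ) (p q : ℕ) :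
    gp S 1 ((g ^ p)⁻¹) ((g ^ q)⁻¹) = gp S 1 (g ^ p) (g ^ q) := by
  have e1 : wdist S ((g ^ p)⁻¹) 1 = wdist S (g ^ p) 1 := by
    rw [wdist_eq, wdist_eq, mul_one, mul_one, inv_inv, ← wl_inv hS (g ^ p)]
  have e2 : wdist S ((g ^ q)⁻¹) 1 = wdist S (g ^ q) 1 := by
    rw [wdist_eq, wdist_eq, mul_one, mul_one, inv_inv, ← wl_inv hS (g ^ q)]
  have e3 : wdist S ((g ^ p)⁻¹) ((g ^ q)⁻¹) = wdist S (g ^ p) (g ^ q) := by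
    rw [wdist_eq, wdist_eq, inv_inv]
    rw [← wl_inv hS (g ^ p * (g ^ q)⁻¹)]
    congr 1
    rw [mul_inv_rev, inv_inv]
    exact (((Commute.refl g).pow_pow q p).inv_right).eq
  rw [gp, gp, e1, e2, e3]

private lemma loxo_core (hS : IsGenSet S) (hδ : IsHyperbolic S δ) {g : Γ}
    (hg : ¬ IsOfFinOrder g) : ConvInf S fun n => g ^ n := by
  classical
  obtain ⟨φ, ρ, h0, hgeod, hray, horb⟩ := chain_exists hS hδ hg
  have RD : RayData S δ g φ ρ := ⟨h0, hgeod, hray, horb⟩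
  obtain ⟨β, sβ, hβeq, hβle, hβ1, hβub⟩ := buse_exists hS RD
  have hδ0 : 0 ≤ δ := hδ.1
  set E : ℝ := 4 * δ + 2 with hE
  have hE0 : 0 ≤ E := by rw [hE]; linarith
  have haxp : ∀ m : ℕ, ∀ C : ℝ, ∃ N : ℕ, ∀ U V : ℕ, N ≤ U → N ≤ V →
      C ≤ gp S 1 ((g ^ m)⁻¹ * ρ V) (ρ U) := by
    intro m
    refine asym_comm hS hδ RD (g ^ m)⁻¹ ?_
    exact (((Commute.refl g).pow_left m).inv_left).eq
  have haxm : ∀ m : ℕ, ∀ C : ℝ, ∃ N : ℕ, ∀ U V : ℕ, N ≤ U → N ≤ V →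
      C ≤ gp S 1 (((g ^ m)⁻¹)⁻¹ * ρ V) (ρ U) := by
    intro m C
    obtain ⟨N, hN⟩ := asym_comm hS hδ RD (g ^ m) (((Commute.refl g).pow_left m).eq) C
    exact ⟨N, fun U V hU hV => by rw [inv_inv]; exact hN U V hU hV⟩
  set u : ℕ → ℝ := fun n => (β (g ^ n) : ℝ) with hu
  set vq : ℕ → ℝ := fun n => (β ((g ^ n)⁻¹) : ℝ) with hvq
  have hqu : ∀ m n : ℕ, |u (m + n) - u m - u n| ≤ E := by
    intro m n
    have h := cocycle hS hδ RD β sβ hβeq (g ^ m) (g ^ n) (haxp m)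
    rw [← pow_add] at h
    have : |u (m + n) - u m - u n| = |(β (g ^ (m + n)) : ℝ) - β (g ^ n) - β (g ^ m)| := by
      rw [hu]
      ring_nf
    rw [this]
    exact h
  have hqv : ∀ m n : ℕ, |vq (m + n) - vq m - vq n| ≤ E := by
    intro m n
    have h := cocycle hS hδ RD β sβ hβeq ((g ^ m)⁻¹) ((g ^ n)⁻¹) (haxm m)
    have e : (g ^ m)⁻¹ * (g ^ n)⁻¹ = (g ^ (m + n))⁻¹ := by
      rw [← mul_inv_rev, ← pow_add, Nat.add_comm]
    rw [e] at h
    have : |vq (m + n) - vq m - vq n| = |(β ((g ^ (m+n))⁻¹) : ℝ) - β ((g ^ n)⁻¹) - β ((g ^ m)⁻¹)| := by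
      rw [hvq]
      ring_nf
    rw [this]
    exact h
  have hcouple : ∀ n : ℕ, |u n + vq n| ≤ E := by
    intro n
    have h := cocycle hS hδ RD β sβ hβeq (g ^ n) ((g ^ n)⁻¹) (haxp n)
    rw [mul_inv_cancel, hβ1] at h
    have heq : u n + vq n = -((((0:ℤ)) : ℝ) - (β ((g ^ n)⁻¹) : ℝ) - (β (g ^ n) : ℝ)) := by
      simp only [hu, hvq]
      push_cast
      ring
    rw [heq, abs_neg]
    exact h
  obtain ⟨α, hα⟩ := homog u E hE0 hqu
  obtain ⟨α', hα'⟩ := homog vq E hE0 hqv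
  have hαsum : α' = -α := by
    by_contra hne
    have hpos : 0 < |α + α'| := by
      rw [abs_pos]
      intro h0
      exact hne (by linarith)
    set n : ℕ := ⌈3 * E / |α + α'|⌉₊ + 1 with hn
    have hn1 : 1 ≤ n := by omega
    have h1 := hα n hn1
    have h2 := hα' n hn1
    have h3 := hcouple n
    have hb : (n : ℝ) * |α + α'| ≤ 3 * E := by
      have e : (n : ℝ) * (α + α') = (u n + vq n) - (u n - n * α) - (vq n - n * α') := by ring
      calc (n : ℝ) * |α + α'| = |(n : ℝ) * (α + α')| := by
            rw [abs_mul, abs_of_nonneg (by positivity : (0:ℝ) ≤ (n:ℝ))]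
        _ = |(u n + vq n) - (u n - n * α) - (vq n - n * α')| := by rw [e]
        _ ≤ |u n + vq n| + |u n - n * α| + |vq n - n * α'| := by
            have t1 := abs_sub (u n + vq n - (u n - n * α)) (vq n - n * α')
            have t2 := abs_sub (u n + vq n) (u n - n * α)
            calc |(u n + vq n) - (u n - n * α) - (vq n - n * α')|
                ≤ |(u n + vq n) - (u n - n * α)| + |vq n - n * α'| := abs_sub _ _
              _ ≤ |u n + vq n| + |u n - n * α| + |vq n - n * α'| := by
                  have := abs_sub (u n + vq n) (u n - n * α)
                  linarith
        _ ≤ 3 * E := by linarith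
    have hlt : 3 * E < (n : ℝ) * |α + α'| := by
      have hceil : 3 * E / |α + α'| ≤ (⌈3 * E / |α + α'|⌉₊ : ℝ) := Nat.le_ceil _
      have hnr : 3 * E / |α + α'| < (n : ℝ) := by
        have : ((⌈3 * E / |α + α'|⌉₊ : ℕ) : ℝ) < (n : ℝ) := by exact_mod_cast by omega
        linarith
      rw [div_lt_iff₀ hpos] at hnr
      linarith
    linarith
  have hkill : α ≠ 0 := by
    intro hα0
    have hub : ∀ n : ℕ, |u n| ≤ E := by
      intro n
      rcases Nat.eq_zero_or_pos n with rfl | hn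
      · have : u 0 = 0 := by rw [hu]; simp [pow_zero, hβ1]
        rw [this, abs_zero]; exact hE0
      · have := hα n hn
        rwa [hα0, mul_zero, sub_zero] at this
    have hdispl : ∀ n : ℕ, ∃ V₀ : ℕ, ∀ v, V₀ ≤ v →
        (wdist S (ρ v) (g ^ n * ρ v) : ℝ) ≤ 4 * δ + E + 2 := by
      intro n
      obtain ⟨V₀, hV₀⟩ := shift_lemma hS hδ RD β sβ hβeq (g ^ n) (haxp n)
      refine ⟨V₀, fun v hv => ?_⟩
      obtain ⟨w, hw1, hw2⟩ := hV₀ v hv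
      have e1 : wdist S ((g ^ n)⁻¹ * ρ v) (ρ w) = wdist S (ρ v) (g ^ n * ρ w) := by
        rw [← wdist_left S (g ^ n) ((g ^ n)⁻¹ * ρ v) (ρ w), mul_inv_cancel_left]
      have hd2 : (wdist S (ρ w) (ρ v) : ℝ) ≤ E + δ + 1 := by
        have hun : |u n| ≤ E := hub n
        rw [abs_le] at hw1 hun
        rcases le_total w v with h | h
        · rw [RD.geod w v h, Nat.cast_sub h]
          have : (β (g ^ n) : ℝ) = u n := rfl
          linarith [hw1.1, hun.2]
        · rw [wdist_symm hS, RD.geod v w h, Nat.cast_sub h]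
          have : (β (g ^ n) : ℝ) = u n := rfl
          linarith [hw1.2, hun.1]
      have tr : wdist S (ρ v) (g ^ n * ρ v) ≤ wdist S (ρ v) (g ^ n * ρ w)
          + wdist S (g ^ n * ρ w) (g ^ n * ρ v) := wdist_triangle hS _ _ _
      have e2 : wdist S (g ^ n * ρ w) (g ^ n * ρ v) = wdist S (ρ w) (ρ v) :=
        wdist_left S _ _ _
      rw [e2, ← e1] at tr
      have tr' : (wdist S (ρ v) (g ^ n * ρ v) : ℝ) ≤ (wdist S ((g ^ n)⁻¹ * ρ v) (ρ w) : ℝ)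
          + (wdist S (ρ w) (ρ v) : ℝ) := by exact_mod_cast tr
      linarith
    choose V₀ hV₀ using hdispl
    set M := ⌈4 * δ + E + 2⌉₊ with hM
    set F := (ball_finite hS M).toFinset with hF
    set NN := F.card + 1 with hNN
    set v := (Finset.range NN).sup V₀ with hv
    have hmapsto : ∀ n ∈ Finset.range NN, (ρ v)⁻¹ * g ^ n * ρ v ∈ F := by
      intro n hn
      have h1 := hV₀ n v (Finset.le_sup hn)
      have h2 : wl S ((ρ v)⁻¹ * g ^ n * ρ v) = wdist S (ρ v) (g ^ n * ρ v) := by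
        rw [wdist_eq, mul_assoc]
      have h3 : (wl S ((ρ v)⁻¹ * g ^ n * ρ v) : ℝ) ≤ (M : ℝ) := by
        rw [h2]
        exact le_trans h1 (Nat.le_ceil _)
      have h4 : wl S ((ρ v)⁻¹ * g ^ n * ρ v) ≤ M := by exact_mod_cast h3
      rw [hF, Set.Finite.mem_toFinset]
      exact h4
    have hcard : F.card < (Finset.range NN).card := by
      rw [Finset.card_range]
      omega
    obtain ⟨n₁, hn₁, n₂, hn₂, hne12, heq⟩ :=
      Finset.exists_ne_map_eq_of_card_lt_of_maps_to hcard hmapsto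
    have hpoweq : g ^ n₁ = g ^ n₂ := by
      have h := heq
      have h1 : g ^ n₁ * ρ v = g ^ n₂ * ρ v := by
        have := congrArg (fun t => ρ v * t) h
        simpa [mul_assoc] using this
      exact mul_right_cancel h1
    exact hg (finOrd_of_pow_eq hne12 hpoweq)
  rw [ConvInf, tendsto_atTop]
  intro C
  rcases lt_or_gt_of_ne hkill with hneg | hpos
  · -- α < 0 : use inverse powers
    have hα'pos : 0 < α' := by rw [hαsum]; linarith
    set N := ⌈(C + E + δ + 1) / α'⌉₊ + 1 with hN
    refine eventually_atTop.2 ⟨(N, N), fun p hp => ?_⟩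
    have hp1 : N ≤ p.1 := hp.1
    have hp2 : N ≤ p.2 := hp.2
    have hdep : ∀ m : ℕ, N ≤ m → C + δ ≤ (β ((g ^ m)⁻¹) : ℝ) := by
      intro m hm
      have hm1 : 1 ≤ m := by omega
      have h1 := hα' m hm1
      rw [abs_le] at h1
      have h2 : (C + E + δ + 1) / α' < (m : ℝ) := by
        have hceil : (C + E + δ + 1) / α' ≤ (⌈(C + E + δ + 1) / α'⌉₊ : ℝ) := Nat.le_ceil _
        have : ((⌈(C + E + δ + 1) / α'⌉₊ : ℕ) : ℝ) < (m : ℝ) := by exact_mod_cast by omega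
        linarith
      rw [div_lt_iff₀ hα'pos] at h2
      have : (m : ℝ) * α' - E ≤ vq m := by linarith [h1.1]
      have : C + δ + 1 ≤ vq m := by linarith
      rw [hvq] at this
      linarith
    have h := depth_prod hS hδ RD β sβ hβeq hβub ((g ^ p.1)⁻¹) ((g ^ p.2)⁻¹)
    rw [gp_pow_inv hS] at h
    have hmin : C + δ ≤ min ((β ((g ^ p.1)⁻¹) : ℝ)) ((β ((g ^ p.2)⁻¹) : ℝ)) :=
      le_min (hdep p.1 hp1) (hdep p.2 hp2)
    linarith
  · -- α > 0
    set N := ⌈(C + E + δ + 1) / α⌉₊ + 1 with hN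
    refine eventually_atTop.2 ⟨(N, N), fun p hp => ?_⟩
    have hp1 : N ≤ p.1 := hp.1
    have hp2 : N ≤ p.2 := hp.2
    have hdep : ∀ m : ℕ, N ≤ m → C + δ ≤ (β (g ^ m) : ℝ) := by
      intro m hm
      have hm1 : 1 ≤ m := by omega
      have h1 := hα m hm1
      rw [abs_le] at h1
      have h2 : (C + E + δ + 1) / α < (m : ℝ) := by
        have hceil : (C + E + δ + 1) / α ≤ (⌈(C + E + δ + 1) / α⌉₊ : ℝ) := Nat.le_ceil _
        have : ((⌈(C + E + δ + 1) / α⌉₊ : ℕ) : ℝ) < (m : ℝ) := by exact_mod_cast by omega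
        linarith
      rw [div_lt_iff₀ hpos] at h2
      have h3 : (m : ℝ) * α - E ≤ u m := by linarith [h1.1]
      have h4 : C + δ + 1 ≤ u m := by linarith
      rw [hu] at h4
      linarith
    have h := depth_prod hS hδ RD β sβ hβeq hβub (g ^ p.1) (g ^ p.2)
    have hmin : C + δ ≤ min ((β (g ^ p.1) : ℝ)) ((β (g ^ p.2) : ℝ)) :=
      le_min (hdep p.1 hp1) (hdep p.2 hp2)
    linarith

end LoxoFinal

set_option maxHeartbeats 1000000

section Prob

variable {Γ : Type} [Group Γ] {S : Set Γ} {μ : Γ → ℝ}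

open Classical in
private lemma ptrans_zero' (x y : Γ) :
    ptrans μ 0 x y = if x = y then 1 else 0 := rfl

private lemma ptrans_succ' (n : ℕ) (x y : Γ) :
    ptrans μ (n + 1) x y = ∑' z : Γ, ptrans μ n x z * μ (z⁻¹ * y) := rfl

private lemma ptrans_nonneg (hμ : IsRWMeasure S μ) :
    ∀ (n : ℕ) (x y : Γ), 0 ≤ ptrans μ n x y
  | 0, x, y => by rw [ptrans_zero']; split_ifs <;> norm_num
  | n + 1, x, y => by
      rw [ptrans_succ']
      exact tsum_nonneg fun z => mul_nonneg (ptrans_nonneg hμ n x z) (hμ.nonneg _)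

/-- summability of one convolution step, from finiteness of the support of `μ` -/
private lemma summable_step (hS : IsGenSet S) (hμ : IsRWMeasure S μ) (f : Γ → ℝ) (y : Γ) :
    Summable fun z : Γ => f z * μ (z⁻¹ * y) := by
  classical
  refine summable_of_ne_finset_zero (s := hS.1.toFinset.image fun s => y * s⁻¹) ?_
  intro z hz
  have : μ (z⁻¹ * y) = 0 := by
    by_contra h
    have hzS : z⁻¹ * y ∈ S := hμ.support_subset _ h
    apply hz
    refine Finset.mem_image.2 ⟨z⁻¹ * y, ?_, by group⟩
    simpa [Set.Finite.mem_toFinset] using hzS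
  rw [this, mul_zero]

private lemma ptrans_left (hS : IsGenSet S) (hμ : IsRWMeasure S μ) :
    ∀ (n : ℕ) (x y : Γ), ptrans μ n x y = ptrans μ n 1 (x⁻¹ * y)
  | 0, x, y => by
      classical
      rw [ptrans_zero', ptrans_zero']
      refine if_congr ⟨fun h => by rw [h, inv_mul_cancel], fun h => ?_⟩ rfl rfl
      have : x * (1 : Γ) = x * (x⁻¹ * y) := by rw [← h]
      simpa [mul_assoc] using this
  | n + 1, x, y => by
      rw [ptrans_succ', ptrans_succ']
      calc ∑' z : Γ, ptrans μ n x z * μ (z⁻¹ * y)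
          = ∑' z : Γ, ptrans μ n 1 (x⁻¹ * z) * μ (z⁻¹ * y) := by
            congr 1; funext z; rw [ptrans_left hS hμ n x z]
        _ = ∑' w : Γ, ptrans μ n 1 (x⁻¹ * (x * w)) * μ ((x * w)⁻¹ * y) :=
            ((Equiv.mulLeft x).tsum_eq _).symm
        _ = ∑' w : Γ, ptrans μ n 1 w * μ (w⁻¹ * (x⁻¹ * y)) := by
            congr 1; funext w
            rw [inv_mul_cancel_left, mul_inv_rev, mul_assoc]

private lemma green_left (hS : IsGenSet S) (hμ : IsRWMeasure S μ) (x y : Γ) :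
    green μ x y = green μ 1 (x⁻¹ * y) := by
  unfold green
  congr 1; funext n; exact ptrans_left hS hμ n x y

/-- Chapman–Kolmogorov inequality -/
private lemma ptrans_mul_le (hS : IsGenSet S) (hμ : IsRWMeasure S μ) (m : ℕ) :
    ∀ (k : ℕ) (x z y : Γ), ptrans μ m x z * ptrans μ k z y ≤ ptrans μ (m + k) x y
  | 0, x, z, y => by
      rw [ptrans_zero', Nat.add_zero]
      split_ifs with h
      · rw [h, mul_one]
      · rw [mul_zero]; exact ptrans_nonneg hμ m x y
  | k + 1, x, z, y => by
      have key : ∀ w : Γ, ptrans μ m x z * (ptrans μ k z w * μ (w⁻¹ * y))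
          ≤ ptrans μ (m + k) x w * μ (w⁻¹ * y) := by
        intro w
        rw [← mul_assoc]
        exact mul_le_mul_of_nonneg_right (ptrans_mul_le hS hμ m k x z w) (hμ.nonneg _)
      calc ptrans μ m x z * ptrans μ (k + 1) z y
          = ∑' w : Γ, ptrans μ m x z * (ptrans μ k z w * μ (w⁻¹ * y)) := by
            rw [ptrans_succ', tsum_mul_left]
        _ ≤ ∑' w : Γ, ptrans μ (m + k) x w * μ (w⁻¹ * y) := by
            refine Summable.tsum_le_tsum key ?_ ?_
            · have := (summable_step hS hμ (fun w => ptrans μ m x z * ptrans μ k z w) y)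
              refine this.congr fun w => ?_
              rw [mul_assoc]
            · exact summable_step hS hμ _ y
        _ = ptrans μ (m + k + 1) x y := (ptrans_succ' _ _ _).symm

private lemma ptrans_one' (hS : IsGenSet S) (hμ : IsRWMeasure S μ) (x y : Γ) :
    ptrans μ 1 x y = μ (x⁻¹ * y) := by
  rw [ptrans_succ']
  rw [tsum_eq_single x (fun z hz => by
    rw [ptrans_zero', if_neg (Ne.symm hz), zero_mul])]
  rw [ptrans_zero', if_pos rfl, one_mul]

private lemma ptrans_list_pos (hS : IsGenSet S) (hμ : IsRWMeasure S μ) :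
    ∀ l : List Γ, (∀ x ∈ l, 0 < μ x) → 0 < ptrans μ l.length 1 l.prod
  | [], _ => by rw [List.length_nil, List.prod_nil, ptrans_zero', if_pos rfl]; norm_num
  | s :: t, hl => by
      have h1 : 0 < ptrans μ 1 1 s := by
        rw [ptrans_one' hS hμ, inv_one, one_mul]
        exact hl s List.mem_cons_self
      have h2 : 0 < ptrans μ t.length s (s * t.prod) := by
        rw [ptrans_left hS hμ, inv_mul_cancel_left]
        exact ptrans_list_pos hS hμ t fun x hx => hl x (List.mem_cons_of_mem s hx)
      have := ptrans_mul_le hS hμ 1 t.length 1 s (s * t.prod)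
      have hpos : 0 < ptrans μ (1 + t.length) 1 (s * t.prod) :=
        lt_of_lt_of_le (mul_pos h1 h2) this
      simpa [List.length_cons, List.prod_cons, Nat.add_comm] using hpos

private lemma exists_ptrans_pos (hS : IsGenSet S) (hμ : IsRWMeasure S μ) (w : Γ) :
    ∃ k : ℕ, 0 < ptrans μ k 1 w := by
  obtain ⟨l, -, hpos, hprod⟩ := hμ.nondeg w
  exact ⟨l.length, hprod ▸ ptrans_list_pos hS hμ l hpos⟩

private lemma summable_transfer (hS : IsGenSet S) (hμ : IsRWMeasure S μ) {y : Γ} (y' : Γ)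
    (h : Summable fun n => ptrans μ n 1 y) : Summable fun n => ptrans μ n 1 y' := by
  obtain ⟨k, hk⟩ := exists_ptrans_pos hS hμ (y'⁻¹ * y)
  have key : ∀ n, ptrans μ n 1 y' ≤ ptrans μ (n + k) 1 y * (ptrans μ k 1 (y'⁻¹ * y))⁻¹ := by
    intro n
    have h1 : ptrans μ n 1 y' * ptrans μ k y' y ≤ ptrans μ (n + k) 1 y :=
      ptrans_mul_le hS hμ n k 1 y' y
    rw [ptrans_left hS hμ k y' y, ← le_div_iff₀ hk] at h1
    simpa [div_eq_mul_inv] using h1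
  refine Summable.of_nonneg_of_le (fun n => ptrans_nonneg hμ n 1 y') key ?_
  exact ((summable_nat_add_iff k).2 h).mul_right _

private lemma green_pos (hS : IsGenSet S) (hμ : IsRWMeasure S μ)
    (hsum : Summable fun n => ptrans μ n 1 (1 : Γ)) (w : Γ) : 0 < green μ 1 w := by
  obtain ⟨k, hk⟩ := exists_ptrans_pos hS hμ w
  exact Summable.tsum_pos (summable_transfer hS hμ w hsum) (fun n => ptrans_nonneg hμ n 1 w) k hk

private lemma green_zero (hS : IsGenSet S) (hμ : IsRWMeasure S μ)
    (hsum : ¬ Summable fun n => ptrans μ n 1 (1 : Γ)) (x y : Γ) : green μ x y = 0 := by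
  rw [green_left hS hμ]
  refine tsum_eq_zero_of_not_summable fun h => hsum ?_
  exact summable_transfer hS hμ 1 h

/-- Harnack-type inequality -/
private lemma harnack (hS : IsGenSet S) (hμ : IsRWMeasure S μ)
    (hsum : Summable fun n => ptrans μ n 1 (1 : Γ)) (x : Γ) :
    ∃ c : ℝ, 0 < c ∧ ∀ y, c * green μ 1 y ≤ green μ x y := by
  obtain ⟨k, hk⟩ := exists_ptrans_pos hS hμ x⁻¹
  have hkx : ptrans μ k x 1 = ptrans μ k 1 x⁻¹ := by
    rw [ptrans_left hS hμ k x 1, mul_one]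
  refine ⟨ptrans μ k 1 x⁻¹, hk, fun y => ?_⟩
  have hxy : Summable fun n => ptrans μ n x y := by
    have := summable_transfer hS hμ (x⁻¹ * y) hsum
    refine this.congr fun n => (ptrans_left hS hμ n x y).symm
  calc ptrans μ k 1 x⁻¹ * green μ 1 y
      = ∑' n : ℕ, ptrans μ k 1 x⁻¹ * ptrans μ n 1 y := tsum_mul_left.symm
    _ ≤ ∑' n : ℕ, ptrans μ (k + n) x y := by
        refine Summable.tsum_le_tsum (fun n => ?_) ?_ ?_
        · rw [← hkx]; exact ptrans_mul_le hS hμ k n x 1 y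
        · exact (summable_transfer hS hμ y hsum).mul_left _
        · have : Summable fun n => ptrans μ (n + k) x y := (summable_nat_add_iff k).2 hxy
          refine this.congr fun n => ?_
          rw [Nat.add_comm]
    _ ≤ ∑' n : ℕ, ptrans μ n x y := by
        have hsum2 : Summable fun n => ptrans μ (k + n) x y := by
          have : Summable fun n => ptrans μ (n + k) x y := (summable_nat_add_iff k).2 hxy
          refine this.congr fun n => ?_
          rw [Nat.add_comm]
        exact Summable.tsum_le_tsum_of_inj (fun n => k + n) (fun a b h => Nat.add_left_cancel h)
          (fun c _ => ptrans_nonneg hμ c x y) (fun n => le_rfl) hsum2 hxy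
    _ = green μ x y := rfl

private lemma martinK_ge (hS : IsGenSet S) (hμ : IsRWMeasure S μ)
    (hsum : Summable fun n => ptrans μ n 1 (1 : Γ)) (x : Γ) :
    ∃ c : ℝ, 0 < c ∧ ∀ y, c ≤ martinK μ x y := by
  obtain ⟨c, hc, hch⟩ := harnack hS hμ hsum x
  refine ⟨c, hc, fun y => ?_⟩
  rw [martinK, le_div_iff₀ (green_pos hS hμ hsum y)]
  exact hch y

end Prob

section Symm

variable {Γ : Type} [Group Γ] {S : Set Γ} {μ : Γ → ℝ}

private lemma ptrans_succ_left (hS : IsGenSet S) (hμ : IsRWMeasure S μ) :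
    ∀ (n : ℕ) (x y : Γ), ptrans μ (n + 1) x y = ∑' z : Γ, μ (x⁻¹ * z) * ptrans μ n z y
  | 0, x, y => by
      classical
      rw [ptrans_one' hS hμ]
      rw [tsum_eq_single y (fun z hz => by
        rw [ptrans_zero', if_neg hz, mul_zero])]
      rw [ptrans_zero', if_pos rfl, mul_one]
  | n + 1, x, y => by
      classical
      set F : Γ → Γ → ℝ := fun z w => μ (x⁻¹ * z) * ptrans μ n z w * μ (w⁻¹ * y) with hF
      have hsum1 : ∀ z, Summable fun w => F z w := fun z =>
        summable_step hS hμ (fun w => μ (x⁻¹ * z) * ptrans μ n z w) y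
      have hsum2 : ∀ w, Summable fun z => F z w := by
        intro w
        refine summable_of_ne_finset_zero (s := hS.1.toFinset.image fun s => x * s) ?_
        intro z hz
        have : μ (x⁻¹ * z) = 0 := by
          by_contra h
          exact hz (Finset.mem_image.2 ⟨x⁻¹ * z, by
            simpa [Set.Finite.mem_toFinset] using hμ.support_subset _ h, by group⟩)
        simp [hF, this]
      have hsumU : Summable (Function.uncurry F) := by
        refine summable_of_ne_finset_zero
          (s := (hS.1.toFinset.image fun s => x * s) ×ˢ (hS.1.toFinset.image fun s => y * s⁻¹)) ?_
        intro p hp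
        rw [Finset.mem_product, not_and_or] at hp
        rcases hp with hp | hp
        · have : μ (x⁻¹ * p.1) = 0 := by
            by_contra h
            exact hp (Finset.mem_image.2 ⟨x⁻¹ * p.1, by
              simpa [Set.Finite.mem_toFinset] using hμ.support_subset _ h, by group⟩)
          simp [Function.uncurry, hF, this]
        · have : μ (p.2⁻¹ * y) = 0 := by
            by_contra h
            exact hp (Finset.mem_image.2 ⟨p.2⁻¹ * y, by
              simpa [Set.Finite.mem_toFinset] using hμ.support_subset _ h, by group⟩)
          simp [Function.uncurry, hF, this]
      calc ptrans μ (n + 2) x y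
          = ∑' w : Γ, ptrans μ (n + 1) x w * μ (w⁻¹ * y) := ptrans_succ' _ _ _
        _ = ∑' w : Γ, (∑' z : Γ, μ (x⁻¹ * z) * ptrans μ n z w) * μ (w⁻¹ * y) := by
            congr 1; funext w; rw [ptrans_succ_left hS hμ n x w]
        _ = ∑' w : Γ, ∑' z : Γ, F z w := by
            congr 1; funext w
            rw [tsum_mul_right]
        _ = ∑' z : Γ, ∑' w : Γ, F z w := Summable.tsum_comm' hsumU hsum1 hsum2
        _ = ∑' z : Γ, μ (x⁻¹ * z) * ptrans μ (n + 1) z y := by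
            congr 1; funext z
            rw [ptrans_succ', ← tsum_mul_left]
            congr 1; funext w
            show μ (x⁻¹ * z) * ptrans μ n z w * μ (w⁻¹ * y) = _
            rw [mul_assoc]

private lemma ptrans_symm (hS : IsGenSet S) (hμ : IsRWMeasure S μ)
    (hsymm : ∀ g : Γ, μ g⁻¹ = μ g) :
    ∀ (n : ℕ) (x y : Γ), ptrans μ n x y = ptrans μ n y x
  | 0, x, y => by
      classical
      rw [ptrans_zero', ptrans_zero']
      exact if_congr eq_comm rfl rfl
  | n + 1, x, y => by
      rw [ptrans_succ', ptrans_succ_left hS hμ n y x]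
      congr 1; funext z
      rw [ptrans_symm hS hμ hsymm n x z, mul_comm]
      congr 1
      rw [← hsymm (z⁻¹ * y)]
      congr 1
      group

private lemma green_symm (hS : IsGenSet S) (hμ : IsRWMeasure S μ)
    (hsymm : ∀ g : Γ, μ g⁻¹ = μ g) (w : Γ) :
    green μ 1 w = green μ 1 w⁻¹ := by
  unfold green
  congr 1; funext n
  rw [ptrans_symm hS hμ hsymm n 1 w, ptrans_left hS hμ n w 1, mul_one]

end Symm

section MainProof

private lemma telescope_ratio (a : ℕ → ℝ) (ha : ∀ n, a n ≠ 0) (m : ℕ) :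
    ∀ l : ℕ, a (m + l) / a m = ∏ i ∈ Finset.range l, a (m + i + 1) / a (m + i)
  | 0 => by simp [div_self (ha m)]
  | l + 1 => by
      rw [Finset.prod_range_succ, ← telescope_ratio a ha m l, ← Nat.add_assoc,
        div_mul_div_comm, mul_comm (a (m + l)) (a (m + l + 1)),
        mul_div_mul_right _ _ (ha (m + l))]

private lemma div_chain (x y z : ℝ) (hy : y ≠ 0) : x / y * (y / z) = x / z := by
  rw [div_mul_div_comm, mul_comm x y, mul_div_mul_left _ _ hy]

variable {Γ : Type} [Group Γ]

private lemma conj_finOrder {g : Γ} (h : Γ) (hg : IsOfFinOrder g) :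
    IsOfFinOrder (h * g * h⁻¹) := by
  rcases isOfFinOrder_iff_pow_eq_one.1 hg with ⟨n, hn, he⟩
  exact isOfFinOrder_iff_pow_eq_one.2
    ⟨n, hn, by rw [conj_pow, he, mul_one, mul_inv_cancel]⟩

private lemma conj_finOrder_iff (g h : Γ) :
    IsOfFinOrder (h * g * h⁻¹) ↔ IsOfFinOrder g := by
  constructor
  · intro hc
    have := conj_finOrder (g := h * g * h⁻¹) h⁻¹ hc
    have e : h⁻¹ * (h * g * h⁻¹) * h⁻¹⁻¹ = g := by group
    rwa [e] at this
  · exact conj_finOrder h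

/-- The key geometric fact: an infinite order element of a hyperbolic group is
loxodromic, so that its sequence of powers converges to infinity.  -/
private lemma loxo {Γ' : Type} [Group Γ'] (S : Set Γ') (δ : ℝ) (hS : IsGenSet S)
    (hδ : IsHyperbolic S δ) (g : Γ') (hg : ¬ IsOfFinOrder g) :
    ConvInf S fun n => g ^ n :=
  loxo_core hS hδ hg

private lemma ratio_tendsto {S : Set Γ} (hS : IsGenSet S) {μ : Γ → ℝ} (hμ : IsRWMeasure S μ)
    (B : Boundary Γ S) (Kb : Γ → B.pt → ℝ)
    (hKb : ∀ (x : Γ) (ξ : B.pt) (u : ℕ → Γ), ConvInf S u → B.cls u = ξ →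
      Tendsto (fun n => martinK μ x (u n)) atTop (𝓝 (Kb x ξ)))
    {g : Γ} (hg : ¬ IsOfFinOrder g) (hcv : ConvInf S fun n => g ^ n) :
    Tendsto (fun n => green μ 1 (g ^ (n + 1)) / green μ 1 (g ^ n)) atTop
      (𝓝 (rfun B Kb g)) := by
  have h := hKb g⁻¹ (plusPt B g) (fun n => g ^ n) hcv rfl
  have he : ∀ n : ℕ, martinK μ g⁻¹ (g ^ n) = green μ 1 (g ^ (n + 1)) / green μ 1 (g ^ n) := by
    intro n
    rw [martinK, green_left hS hμ g⁻¹ (g ^ n), inv_inv, ← pow_succ']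
  have h2 := h.congr he
  simp only [rfun, if_neg hg]
  exact h2

end MainProof
theorem rfun_class_function
    (Γ : Type) [Group Γ] (S : Set Γ) (δ : ℝ)
    (hS : IsGenSet S) (hδ : IsHyperbolic S δ) (hne : Nonelementary Γ)
    (μ : Γ → ℝ) (hμ : IsRWMeasure S μ)
    (B : Boundary Γ S)
    (Kb : Γ → B.pt → ℝ)
    (hKb : ∀ (x : Γ) (ξ : B.pt) (u : ℕ → Γ), ConvInf S u → B.cls u = ξ →
      Tendsto (fun n => martinK μ x (u n)) atTop (𝓝 (Kb x ξ))) :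
    (∀ g h : Γ, rfun B Kb (h * g * h⁻¹) = rfun B Kb g) ∧
    (∀ (g : Γ) (k : ℕ), rfun B Kb (g ^ k) = rfun B Kb g ^ k) ∧
    ((∀ g : Γ, μ g⁻¹ = μ g) → ∀ g : Γ, rfun B Kb g⁻¹ = rfun B Kb g) := by
  classical
  have RT : ∀ g : Γ, ¬ IsOfFinOrder g →
      Tendsto (fun n => green μ 1 (g ^ (n + 1)) / green μ 1 (g ^ n)) atTop
        (𝓝 (rfun B Kb g)) :=
    fun g hg => ratio_tendsto hS hμ B Kb hKb hg (loxo S δ hS hδ g hg)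
  have hzero : (¬ Summable fun n => ptrans μ n 1 (1 : Γ)) →
      ∀ g : Γ, ¬ IsOfFinOrder g → rfun B Kb g = 0 := by
    intro hdeg g hg
    refine tendsto_nhds_unique (RT g hg) ?_
    have he : (fun n : ℕ => green μ 1 (g ^ (n + 1)) / green μ 1 (g ^ n))
        = fun _ => (0 : ℝ) := by
      funext n
      rw [green_zero hS hμ hdeg, zero_div]
    rw [he]
    exact tendsto_const_nhds
  refine ⟨?_, ?_, ?_⟩
  · -- conjugation invariance
    intro g h
    by_cases hg : IsOfFinOrder g
    · simp only [rfun, if_pos hg, if_pos ((conj_finOrder_iff g h).2 hg)]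
    · have hgc : ¬ IsOfFinOrder (h * g * h⁻¹) := fun hc => hg ((conj_finOrder_iff g h).1 hc)
      by_cases hdeg : Summable fun n => ptrans μ n 1 (1 : Γ)
      · -- nondegenerate case
        have hga : ∀ w : Γ, 0 < green μ 1 w := green_pos hS hμ hdeg
        have hcv : ConvInf S fun n => g ^ n := loxo S δ hS hδ g hg
        have hvcv : ConvInf S fun n => g ^ n * h⁻¹ := by
          have := convInf_affine hS hcv 1 h⁻¹
          simpa [one_mul] using this
        have hcross : Tendsto (fun p : ℕ × ℕ => gp S 1 (g ^ p.1) (g ^ p.2 * h⁻¹))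
            atTop atTop := by
          have hb := tendsto_atTop_add_const_right atTop
            (-((wl S (1 : Γ) : ℝ) + wl S (1 : Γ) + wl S h⁻¹)) hcv
          refine tendsto_atTop_mono (fun p => ?_) hb
          have h3 := gp_conj_ge hS 1 1 h⁻¹ (g ^ p.1) (g ^ p.2)
          simp only [one_mul, mul_one] at h3
          simpa [sub_eq_add_neg] using h3
        have KEY : Kb g⁻¹ (B.cls fun n => g ^ n)
            = Kb g⁻¹ (B.cls fun n => g ^ n * h⁻¹) := by
          have hz := convInf_interleave hS hcv hvcv hcross
          have T := hKb g⁻¹ _ _ hz rfl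
          obtain ⟨Te, To⟩ := tendsto_of_interleave (F := fun y => martinK μ g⁻¹ y)
            (u := fun n => g ^ n) (v := fun n => g ^ n * h⁻¹) T
          have T1 := hKb g⁻¹ _ _ hcv rfl
          have T2 := hKb g⁻¹ _ _ hvcv rfl
          rw [tendsto_nhds_unique T1 Te, tendsto_nhds_unique T2 To]
        obtain ⟨c, hc, hcK⟩ := martinK_ge hS hμ hdeg h⁻¹
        have TMv0 := hKb h⁻¹ _ _ hvcv rfl
        have hL2pos : 0 < Kb h⁻¹ (B.cls fun n => g ^ n * h⁻¹) :=
          lt_of_lt_of_le hc (ge_of_tendsto' TMv0 fun n => hcK _)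
        have hMv : ∀ n : ℕ, martinK μ h⁻¹ (g ^ n * h⁻¹)
            = green μ 1 (h * g ^ n * h⁻¹) / green μ 1 (g ^ n * h⁻¹) := by
          intro n
          rw [martinK, green_left hS hμ h⁻¹ (g ^ n * h⁻¹), inv_inv, ← mul_assoc]
        have hMg : ∀ n : ℕ, martinK μ g⁻¹ (g ^ n * h⁻¹)
            = green μ 1 (g ^ (n + 1) * h⁻¹) / green μ 1 (g ^ n * h⁻¹) := by
          intro n
          rw [martinK, green_left hS hμ g⁻¹ (g ^ n * h⁻¹), inv_inv, ← mul_assoc,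
            ← pow_succ']
        have TMv : Tendsto
            (fun n => green μ 1 (h * g ^ n * h⁻¹) / green μ 1 (g ^ n * h⁻¹))
            atTop (𝓝 (Kb h⁻¹ (B.cls fun n => g ^ n * h⁻¹))) := TMv0.congr hMv
        have TMg : Tendsto
            (fun n => green μ 1 (g ^ (n + 1) * h⁻¹) / green μ 1 (g ^ n * h⁻¹))
            atTop (𝓝 (rfun B Kb g)) := by
          have T := (hKb g⁻¹ _ _ hvcv rfl).congr hMg
          rw [← KEY] at T
          have hrg : Kb g⁻¹ (B.cls fun n => g ^ n) = rfun B Kb g := by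
            simp only [rfun, if_neg hg]; rfl
          rwa [hrg] at T
        have TA : Tendsto
            (fun n => green μ 1 (h * g ^ (n + 1) * h⁻¹) / green μ 1 (g ^ (n + 1) * h⁻¹))
            atTop (𝓝 (Kb h⁻¹ (B.cls fun n => g ^ n * h⁻¹))) := by
          have := TMv.comp (tendsto_add_atTop_nat 1)
          exact this.congr fun n => rfl
        have TC : Tendsto
            (fun n => green μ 1 (g ^ n * h⁻¹) / green μ 1 (h * g ^ n * h⁻¹))
            atTop (𝓝 (Kb h⁻¹ (B.cls fun n => g ^ n * h⁻¹))⁻¹) := by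
          have := TMv.inv₀ (ne_of_gt hL2pos)
          exact this.congr fun n => by rw [inv_div]
        have TABC : Tendsto
            (fun n => green μ 1 (h * g ^ (n + 1) * h⁻¹) / green μ 1 (h * g ^ n * h⁻¹))
            atTop (𝓝 (rfun B Kb g)) := by
          have T := (TA.mul TMg).mul TC
          have hval : Kb h⁻¹ (B.cls fun n => g ^ n * h⁻¹) * rfun B Kb g
              * (Kb h⁻¹ (B.cls fun n => g ^ n * h⁻¹))⁻¹ = rfun B Kb g := by
            rw [mul_right_comm, mul_inv_cancel₀ (ne_of_gt hL2pos), one_mul]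
          rw [hval] at T
          refine T.congr fun n => ?_
          have h3 := (hga (g ^ (n + 1) * h⁻¹)).ne'
          have h4 := (hga (g ^ n * h⁻¹)).ne'
          rw [div_chain _ _ _ h3, div_chain _ _ _ h4]
        have Tfin := RT (h * g * h⁻¹) hgc
        have heq : ∀ n : ℕ,
            green μ 1 ((h * g * h⁻¹) ^ (n + 1)) / green μ 1 ((h * g * h⁻¹) ^ n)
            = green μ 1 (h * g ^ (n + 1) * h⁻¹) / green μ 1 (h * g ^ n * h⁻¹) := by
          intro n
          rw [conj_pow, conj_pow]
        exact tendsto_nhds_unique (Tfin.congr heq) TABC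
      · rw [hzero hdeg _ hgc, hzero hdeg g hg]
  · -- powers
    intro g k
    rcases Nat.eq_zero_or_pos k with rfl | hk
    · simp only [pow_zero]
      simp only [rfun, if_pos IsOfFinOrder.one]
    · by_cases hg : IsOfFinOrder g
      · simp only [rfun, if_pos hg, if_pos (hg.pow), one_pow]
      · have hgk : ¬ IsOfFinOrder (g ^ k) := by
          intro hfin
          apply hg
          obtain ⟨m, hm, he⟩ := isOfFinOrder_iff_pow_eq_one.1 hfin
          exact isOfFinOrder_iff_pow_eq_one.2
            ⟨k * m, Nat.mul_pos hk hm, by rw [pow_mul]; exact he⟩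
        by_cases hdeg : Summable fun n => ptrans μ n 1 (1 : Γ)
        · have hga : ∀ w : Γ, 0 < green μ 1 w := green_pos hS hμ hdeg
          have Tk := RT (g ^ k) hgk
          have Tg := RT g hg
          have heq : ∀ n : ℕ,
              green μ 1 ((g ^ k) ^ (n + 1)) / green μ 1 ((g ^ k) ^ n)
              = ∏ i ∈ Finset.range k,
                  green μ 1 (g ^ (k * n + i + 1)) / green μ 1 (g ^ (k * n + i)) := by
            intro n
            rw [← pow_mul, ← pow_mul]
            have htel := telescope_ratio (fun m => green μ 1 (g ^ m))
              (fun m => (hga _).ne') (k * n) k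
            have hkk : k * (n + 1) = k * n + k := by ring
            rw [hkk]
            simpa using htel
          have Tprod : Tendsto
              (fun n => ∏ i ∈ Finset.range k,
                green μ 1 (g ^ (k * n + i + 1)) / green μ 1 (g ^ (k * n + i)))
              atTop (𝓝 (rfun B Kb g ^ k)) := by
            have hfac : ∀ i ∈ Finset.range k, Tendsto
                (fun n => green μ 1 (g ^ (k * n + i + 1)) / green μ 1 (g ^ (k * n + i)))
                atTop (𝓝 (rfun B Kb g)) := by
              intro i _
              have hφ : Tendsto (fun n : ℕ => k * n + i) atTop atTop := by
                refine tendsto_atTop_mono (fun n => ?_) tendsto_id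
                calc (n : ℕ) = 1 * n := (one_mul n).symm
                  _ ≤ k * n := Nat.mul_le_mul_right n hk
                  _ ≤ k * n + i := Nat.le_add_right _ _
              exact Tg.comp hφ
            have := tendsto_finset_prod (Finset.range k) hfac
            simpa [Finset.prod_const, Finset.card_range] using this
          exact tendsto_nhds_unique (Tk.congr heq) Tprod
        · rw [hzero hdeg _ hgk, hzero hdeg g hg, zero_pow hk.ne']
  · -- symmetry
    intro hsymm g
    by_cases hg : IsOfFinOrder g
    · simp only [rfun, if_pos hg, if_pos (isOfFinOrder_inv_iff.2 hg)]
    · have hgi : ¬ IsOfFinOrder g⁻¹ := fun hc => hg (isOfFinOrder_inv_iff.1 hc)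
      refine tendsto_nhds_unique (RT g⁻¹ hgi) ?_
      have he : ∀ n : ℕ, green μ 1 (g ^ (n + 1)) / green μ 1 (g ^ n)
          = green μ 1 (g⁻¹ ^ (n + 1)) / green μ 1 (g⁻¹ ^ n) := by
        intro n
        rw [inv_pow, inv_pow, ← green_symm hS hμ hsymm (g ^ (n + 1)),
          ← green_symm hS hμ hsymm (g ^ n)]
      exact (RT g hg).congr he

end HarmonicBoundary
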